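/- arXiv:2411.05931 — 6 statements merged into one kernel-verified Lean document; each statement's English description precedes it below -/
import Mathlib

section
/- Let m ≥ 2 and let M ⊆ 2^{ℝ^d} be a nonempty finite set of m-gons (sets of cardinality m) in Euclidean ℝ^d. Define H(M) as the hypergraph on vertex set ℝ^d whose edges are all subsets of ℝ^d congruent in ℝ^d to some T ∈ M. Then there exists a finite set S of (m+1)-gons ((m+1)-element subsets of ℝ^d) such that H(M) is equivalent to H(S), where H(S) is the hypergraph on ℝ^d whose edges are all subsets of ℝ^d congruent in ℝ^d to some element of S. -/
/-- A proper coloring of a hypergraph with edge set `E`: no edge is monochromatic. -/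
def IsProperColoring {V : Type} {C : Type} (E : Set (Set V)) (φ : V → C) : Prop :=
  ∀ e ∈ E, ∃ x ∈ e, ∃ y ∈ e, φ x ≠ φ y

/-- The chromatic number of a hypergraph with vertex type `V` and edge set `E`. -/
noncomputable def chromNum {V : Type} (E : Set (Set V)) : Cardinal :=
  sInf {c : Cardinal | ∃ (C : Type) (φ : V → C), Cardinal.mk C = c ∧ IsProperColoring E φ}

/-- Two hypergraphs on the same vertex set are equivalent if they have the same chromatic
number and, for color sets of exactly that cardinality, have the same proper colorings. -/
def EquivalentHypergraphs {V : Type} (E₁ E₂ : Set (Set V)) : Prop :=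
  chromNum E₁ = chromNum E₂ ∧
    ∀ (C : Type) (φ : V → C), Cardinal.mk C = chromNum E₁ →
      (IsProperColoring E₁ φ ↔ IsProperColoring E₂ φ)

/-- Congruence in Euclidean `ℝ^d`: one set is the image of the other under an isometry
of Euclidean space. -/
def EucCongruent {d : ℕ} (X Y : Set (EuclideanSpace ℝ (Fin d))) : Prop :=
  ∃ ρ : EuclideanSpace ℝ (Fin d) ≃ᵢ EuclideanSpace ℝ (Fin d), Y = ρ '' X

/-- The edge set of the hypergraph `H(M)` on `ℝ^d`: all congruent copies of members of `M`. -/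
def congruenceEdges {d : ℕ} (M : Set (Set (EuclideanSpace ℝ (Fin d)))) :
    Set (Set (EuclideanSpace ℝ (Fin d))) :=
  {e | ∃ T ∈ M, EucCongruent T e}

section Aux

variable {d : ℕ} {M : Set (Set (EuclideanSpace ℝ (Fin d)))}

lemma mem_congruenceEdges_self {T : Set (EuclideanSpace ℝ (Fin d))} (hT : T ∈ M) :
    T ∈ congruenceEdges M :=
  ⟨T, hT, IsometryEquiv.refl _, (Set.image_id T).symm⟩

lemma congruenceEdges_image (ρ : EuclideanSpace ℝ (Fin d) ≃ᵢ EuclideanSpace ℝ (Fin d))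
    {e : Set (EuclideanSpace ℝ (Fin d))} (he : e ∈ congruenceEdges M) :
    ρ '' e ∈ congruenceEdges M := by
  obtain ⟨T, hT, σ, rfl⟩ := he
  refine ⟨T, hT, σ.trans ρ, ?_⟩
  rw [← Set.image_comp]
  rfl

lemma proper_of_proper_comp {V C C' : Type} {E : Set (Set V)} {φ : V → C} {f : C → C'}
    (h : IsProperColoring E (f ∘ φ)) : IsProperColoring E φ := by
  intro e he
  obtain ⟨x, hx, y, hy, hxy⟩ := h e he
  exact ⟨x, hx, y, hy, fun hc => hxy (by simp [Function.comp, hc])⟩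

lemma proper_comp_of_injective {V C C' : Type} {E : Set (Set V)} {φ : V → C} {f : C → C'}
    (hf : Function.Injective f) (h : IsProperColoring E φ) : IsProperColoring E (f ∘ φ) := by
  intro e he
  obtain ⟨x, hx, y, hy, hxy⟩ := h e he
  exact ⟨x, hx, y, hy, fun hc => hxy (hf hc)⟩

end Aux
open Set

section Cube

variable {d : ℕ}

lemma abs_sub_lt_of_floor_eq {s x y : ℝ} (hs : 0 < s) (h : ⌊x / s⌋ = ⌊y / s⌋) :
    |x - y| < s := by
  have h1 := Int.floor_le (x / s); have h2 := Int.lt_floor_add_one (x / s)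
  have h3 := Int.floor_le (y / s); have h4 := Int.lt_floor_add_one (y / s)
  rw [h] at h1 h2
  rw [abs_sub_lt_iff]
  constructor
  · have h5 : (x - y) / s < 1 := by rw [← div_sub_div_same]; linarith
    linarith [(div_lt_one hs).1 h5]
  · have h5 : (y - x) / s < 1 := by rw [← div_sub_div_same]; linarith
    linarith [(div_lt_one hs).1 h5]

lemma abs_sub_floor_ge {s x y : ℝ} (hs : 0 < s) {K : ℤ} (h : (K:ℝ) ≤ |(⌊x / s⌋ : ℝ) - (⌊y / s⌋ : ℝ)|)
    : ((K:ℝ) - 1) * s < |x - y| := by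
  have h1 := Int.floor_le (x / s); have h2 := Int.lt_floor_add_one (x / s)
  have h3 := Int.floor_le (y / s); have h4 := Int.lt_floor_add_one (y / s)
  have key : (K:ℝ) - 1 < |x / s - y / s| := by
    rcases abs_cases ((⌊x / s⌋ : ℝ) - (⌊y / s⌋ : ℝ)) with ⟨he, _⟩ | ⟨he, _⟩
    · rw [he] at h
      calc (K:ℝ) - 1 ≤ (⌊x / s⌋ : ℝ) - (⌊y / s⌋ : ℝ) - 1 := by linarith
        _ < x / s - y / s := by linarith
        _ ≤ |x / s - y / s| := le_abs_self _
    · rw [he] at h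
      calc (K:ℝ) - 1 ≤ (⌊y / s⌋ : ℝ) - (⌊x / s⌋ : ℝ) - 1 := by linarith
        _ < y / s - x / s := by linarith
        _ ≤ |x / s - y / s| := by rw [abs_sub_comm]; exact le_abs_self _
  have hxy : x / s - y / s = (x - y) / s := by ring
  rw [hxy, abs_div, abs_of_pos hs] at key
  calc ((K:ℝ) - 1) * s < (|x - y| / s) * s := by
        apply mul_lt_mul_of_pos_right _ hs
        exact key
    _ = |x - y| := div_mul_cancel₀ _ hs.ne'

lemma coord_le_dist (a b : EuclideanSpace ℝ (Fin d)) (i : Fin d) :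
    |a i - b i| ≤ dist a b := by
  rw [EuclideanSpace.dist_eq]
  have h1 : dist (a i) (b i) ^ 2 ≤ ∑ j, dist (a j) (b j) ^ 2 :=
    Finset.single_le_sum (f := fun j => dist (a j) (b j) ^ 2) (fun j _ => sq_nonneg _) (Finset.mem_univ i)
  calc |a i - b i| = Real.sqrt (dist (a i) (b i) ^ 2) := by
        rw [Real.sqrt_sq_eq_abs, Real.dist_eq, abs_abs]
    _ ≤ _ := Real.sqrt_le_sqrt h1

lemma dist_lt_of_coords {a b : EuclideanSpace ℝ (Fin d)} {s r : ℝ} (hr : 0 < r)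
    (hds : (d : ℝ) * s ^ 2 < r ^ 2) (h : ∀ i, |a i - b i| < s) : dist a b < r := by
  rw [EuclideanSpace.dist_eq]
  rw [show r = Real.sqrt (r ^ 2) by rw [Real.sqrt_sq hr.le]]
  apply Real.sqrt_lt_sqrt (Finset.sum_nonneg fun j _ => sq_nonneg _)
  have hsum : ∑ j, dist (a j) (b j) ^ 2 ≤ (d : ℝ) * s ^ 2 := by
    have : ∀ j ∈ Finset.univ, dist (a j) (b j) ^ 2 ≤ s ^ 2 := by
      intro j _
      rw [Real.dist_eq]
      have h0 : (0:ℝ) ≤ |a j - b j| := abs_nonneg _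
      nlinarith [h j]
    calc ∑ j, dist (a j) (b j) ^ 2 ≤ ∑ _j : Fin d, s ^ 2 := Finset.sum_le_sum this
      _ = (d : ℝ) * s ^ 2 := by simp [Finset.sum_const, Finset.card_univ]
  linarith

end Cube

section Coloring

variable {d m : ℕ} {M : Set (Set (EuclideanSpace ℝ (Fin d)))}

lemma exists_two_points {T : Set (EuclideanSpace ℝ (Fin d))} (hm : 2 ≤ m) (hT : T.ncard = m) :
    ∃ p q, p ∈ T ∧ q ∈ T ∧ p ≠ q := by
  have hfin : T.Finite := Set.finite_of_ncard_ne_zero (by omega)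
  exact (Set.one_lt_ncard_iff hfin).1 (by omega)

lemma exists_finite_proper (hm : 2 ≤ m) (hMfin : M.Finite) (hMcard : ∀ T ∈ M, T.ncard = m) :
    ∃ (C : Type) (φ : EuclideanSpace ℝ (Fin d) → C), Finite C ∧
      IsProperColoring (congruenceEdges M) φ := by
  haveI := hMfin.to_subtype
  have hpq : ∀ T : M, ∃ p q, p ∈ (T : Set (EuclideanSpace ℝ (Fin d))) ∧ q ∈ (T : Set _) ∧ p ≠ q :=
    fun T => exists_two_points hm (hMcard T T.2)
  choose p q hp hq hpq using hpq
  set r : M → ℝ := fun T => dist (p T) (q T) with hrdef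
  have hr : ∀ T, 0 < r T := fun T => dist_pos.2 (hpq T)
  set s : M → ℝ := fun T => r T / (d + 1) with hsdef
  have hs : ∀ T, 0 < s T := fun T => div_pos (hr T) (by positivity)
  refine ⟨M → Fin d → ZMod (d + 3),
    fun x T i => ((⌊x i / s T⌋ : ℤ) : ZMod (d + 3)), inferInstance, ?_⟩
  rintro e ⟨T, hT, ρ, rfl⟩
  set Tm : M := ⟨T, hT⟩
  refine ⟨ρ (p Tm), Set.mem_image_of_mem _ (hp Tm), ρ (q Tm), Set.mem_image_of_mem _ (hq Tm), ?_⟩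
  intro hEq
  set a := ρ (p Tm); set b := ρ (q Tm)
  have hab : dist a b = r Tm := ρ.dist_eq _ _
  have hcoord : ∀ i, ((⌊a i / s Tm⌋ : ℤ) : ZMod (d + 3)) = ((⌊b i / s Tm⌋ : ℤ) : ZMod (d + 3)) :=
    fun i => congrFun (congrFun hEq Tm) i
  by_cases h1 : ∀ i, ⌊a i / s Tm⌋ = ⌊b i / s Tm⌋
  · have hlt : dist a b < r Tm := by
      apply dist_lt_of_coords (hr Tm) _ (fun i => abs_sub_lt_of_floor_eq (hs Tm) (h1 i))
      have h2 : (0:ℝ) < r Tm := hr Tm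
      have h3 : s Tm = r Tm / (d + 1) := rfl
      rw [h3, div_pow, ← mul_div_assoc, div_lt_iff₀ (by positivity : (0:ℝ) < ((d:ℝ)+1)^2)]
      nlinarith [sq_nonneg ((d : ℝ)), h2]
    linarith [hab ▸ hlt]
  · push_neg at h1
    obtain ⟨i, hi⟩ := h1
    have hdvd : ((d : ℤ) + 3) ∣ ⌊b i / s Tm⌋ - ⌊a i / s Tm⌋ := by
      have := (ZMod.intCast_eq_intCast_iff _ _ _).1 (hcoord i)
      have h2 := Int.ModEq.dvd this
      simpa using h2
    have hge : ((d : ℤ) + 3 : ℤ) ≤ |⌊b i / s Tm⌋ - ⌊a i / s Tm⌋| := by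
      apply Int.le_of_dvd (abs_pos.2 (sub_ne_zero.2 (Ne.symm hi))) ((dvd_abs _ _).2 hdvd)
    have hge' : ((d : ℝ) + 3) ≤ |(⌊b i / s Tm⌋ : ℝ) - (⌊a i / s Tm⌋ : ℝ)| := by
      exact_mod_cast hge
    have hbig : ((d : ℝ) + 3 - 1) * s Tm < |b i - a i| := by
      have := abs_sub_floor_ge (hs Tm) (K := (d : ℤ) + 3) (x := b i) (y := a i) (by push_cast; exact hge')
      push_cast at this
      exact this
    have hcle : |b i - a i| ≤ dist a b := by rw [abs_sub_comm]; exact coord_le_dist a b i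
    have hsr : ((d : ℝ) + 2) * s Tm > r Tm := by
      have h3 : s Tm = r Tm / (d + 1) := rfl
      rw [h3, ← mul_div_assoc, gt_iff_lt, lt_div_iff₀ (by positivity : (0:ℝ) < (d:ℝ)+1)]
      nlinarith [hr Tm]
    rw [hab] at hcle
    nlinarith [hbig, hcle, hsr, hs Tm]

end Coloring

section Compact

variable {d : ℕ} {M : Set (Set (EuclideanSpace ℝ (Fin d)))}

lemma exists_finite_witness {n : ℕ}
    (hEfin : ∀ e ∈ congruenceEdges M, e.Finite)
    (hno : ∀ ψ : EuclideanSpace ℝ (Fin d) → Fin n, ¬ IsProperColoring (congruenceEdges M) ψ) :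
    ∃ W : Set (EuclideanSpace ℝ (Fin d)), W.Finite ∧
      ∀ ψ : EuclideanSpace ℝ (Fin d) → Fin n,
        ∃ e ∈ congruenceEdges M, e ⊆ W ∧ ∀ x ∈ e, ∀ y ∈ e, ψ x = ψ y := by
  classical
  letI : TopologicalSpace (Fin n) := ⊥
  haveI : DiscreteTopology (Fin n) := ⟨rfl⟩
  set Z : {e // e ∈ congruenceEdges M} → Set (EuclideanSpace ℝ (Fin d) → Fin n) :=
    fun e => {ψ | ∃ x ∈ e.1, ∃ y ∈ e.1, ψ x ≠ ψ y} with hZ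
  have hclosed : ∀ e, IsClosed (Z e) := by
    intro e
    have he : Z e = ⋃ x ∈ e.1, ⋃ y ∈ e.1,
        {ψ : EuclideanSpace ℝ (Fin d) → Fin n | ψ x ≠ ψ y} := by
      ext ψ; simp [hZ]
    rw [he]
    apply (hEfin e.1 e.2).isClosed_biUnion
    intro x _
    apply (hEfin e.1 e.2).isClosed_biUnion
    intro y _
    have h2 : {ψ : EuclideanSpace ℝ (Fin d) → Fin n | ψ x ≠ ψ y} =
        (fun ψ : EuclideanSpace ℝ (Fin d) → Fin n => (ψ x, ψ y)) ⁻¹'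
          {p : Fin n × Fin n | p.1 ≠ p.2} := rfl
    rw [h2]
    exact (isClosed_discrete _).preimage ((continuous_apply x).prodMk (continuous_apply y))
  have hempty : (Set.univ : Set (EuclideanSpace ℝ (Fin d) → Fin n)) ∩ ⋂ e, Z e = ∅ := by
    rw [Set.univ_inter]
    ext ψ
    simp only [Set.mem_iInter, Set.mem_empty_iff_false, iff_false]
    intro h
    exact hno ψ (fun e he => h ⟨e, he⟩)
  obtain ⟨t, ht⟩ := isCompact_univ.elim_finite_subfamily_closed Z hclosed hempty
  refine ⟨⋃ e ∈ t, e.1, t.finite_toSet.biUnion (fun e _ => hEfin e.1 e.2), ?_⟩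
  intro ψ
  have hmem : ψ ∉ ⋂ e ∈ t, Z e := by
    intro h
    have h2 : ψ ∈ (Set.univ : Set (EuclideanSpace ℝ (Fin d) → Fin n)) ∩ ⋂ e ∈ t, Z e :=
      ⟨trivial, h⟩
    rw [ht] at h2; exact h2
  simp only [Set.mem_iInter, not_forall] at hmem
  obtain ⟨e, het, hnot⟩ := hmem
  refine ⟨e.1, e.2, Set.subset_biUnion_of_mem het, ?_⟩
  intro x hx y hy
  by_contra hne
  exact hnot ⟨x, hx, y, hy, hne⟩

end Compact

section Engine

variable {d m : ℕ} {M : Set (Set (EuclideanSpace ℝ (Fin d)))}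

lemma edge_ncard (hMcard : ∀ T ∈ M, T.ncard = m) {e : Set (EuclideanSpace ℝ (Fin d))}
    (he : e ∈ congruenceEdges M) : e.ncard = m := by
  obtain ⟨T, hT, σ, rfl⟩ := he
  rw [Set.ncard_image_of_injective _ σ.injective]
  exact hMcard T hT

lemma edge_nonempty (hm : 2 ≤ m) (hMcard : ∀ T ∈ M, T.ncard = m)
    {e : Set (EuclideanSpace ℝ (Fin d))} (he : e ∈ congruenceEdges M) : e.Nonempty :=
  Set.nonempty_of_ncard_ne_zero (by rw [edge_ncard hMcard he]; omega)

lemma edge_finite (hm : 2 ≤ m) (hMcard : ∀ T ∈ M, T.ncard = m)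
    {e : Set (EuclideanSpace ℝ (Fin d))} (he : e ∈ congruenceEdges M) : e.Finite :=
  Set.finite_of_ncard_ne_zero (by rw [edge_ncard hMcard he]; omega)

lemma engine {n : ℕ} (hn : 2 ≤ n) (hm : 2 ≤ m)
    {S : Set (Set (EuclideanSpace ℝ (Fin d)))}
    (hMcard : ∀ T ∈ M, T.ncard = m)
    {W : Set (EuclideanSpace ℝ (Fin d))}
    {σ : ℕ → (EuclideanSpace ℝ (Fin d) ≃ᵢ EuclideanSpace ℝ (Fin d))}
    (hW : ∀ ψ : EuclideanSpace ℝ (Fin d) → Fin (n - 1),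
      ∃ e ∈ congruenceEdges M, e ⊆ W ∧ ∀ x ∈ e, ∀ y ∈ e, ψ x = ψ y)
    (hdisjTY : ∀ T ∈ M, ∀ j, 1 ≤ j → j ≤ n → Disjoint T (σ j '' W))
    (hdisjYY : ∀ j l, 1 ≤ j → j < l → l ≤ n → Disjoint (σ j '' W) (σ l '' W))
    (hSins : ∀ (B : Set (EuclideanSpace ℝ (Fin d))) (w), B ∈ congruenceEdges M → w ∉ B →
      (B ⊆ ⋃₀ M ∨ ∃ j, 1 ≤ j ∧ j ≤ n ∧ B ⊆ σ j '' W) →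
      (∃ j, 1 ≤ j ∧ j ≤ n ∧ w ∈ σ j '' W) → insert w B ∈ S)
    (φ : EuclideanSpace ℝ (Fin d) → Fin n)
    (hS : IsProperColoring (congruenceEdges S) φ) :
    IsProperColoring (congruenceEdges M) φ := by
  classical
  rintro e ⟨T, hT, ρ₀, rfl⟩
  by_contra hcon
  push_neg at hcon
  -- hcon : ∀ x ∈ ρ₀ '' T, ∀ y ∈ ρ₀ '' T, φ x = φ y
  set X : ℕ → Set (EuclideanSpace ℝ (Fin d)) := fun j => if j = 0 then T else σ j '' W with hX
  have hX0 : X 0 = T := by simp [hX]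
  have hXpos : ∀ j, 1 ≤ j → X j = σ j '' W := by
    intro j hj
    show (if j = 0 then T else ⇑(σ j) '' W) = ⇑(σ j) '' W
    rw [if_neg (by omega)]
  have key : ∀ i, i ≤ n → ∃ f : ℕ → Fin n,
      (∀ j, j ≤ i → ∃ B, B ∈ congruenceEdges M ∧ B ⊆ ρ₀ '' X j ∧ ∀ x ∈ B, φ x = f j) ∧
      (∀ j j', j < j' → j' ≤ i → ∀ x ∈ ρ₀ '' X j', φ x ≠ f j) := by
    intro i
    induction i with
    | zero =>
      intro _
      have hTne : T.Nonempty :=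
        Set.nonempty_of_ncard_ne_zero (by rw [hMcard T hT]; omega)
      obtain ⟨p0, hp0⟩ := hTne
      refine ⟨fun _ => φ (ρ₀ p0), ?_, ?_⟩
      · intro j hj
        rw [Nat.le_zero] at hj
        subst hj
        refine ⟨ρ₀ '' T, congruenceEdges_image ρ₀ (mem_congruenceEdges_self hT), by rw [hX0],
          fun x hx => hcon x hx (ρ₀ p0) (Set.mem_image_of_mem _ hp0)⟩
      · intro j j' hjj' hj'
        omega
    | succ i ih =>
      intro hin
      obtain ⟨f, hf1, hf2⟩ := ih (by omega)
      by_cases hsucc : ∃ w ∈ ρ₀ '' X (i + 1), ∃ j, j ≤ i ∧ φ w = f j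
      · exfalso
        obtain ⟨w, hw, j, hji, hwc⟩ := hsucc
        obtain ⟨B, hBE, hBsub, hBmono⟩ := hf1 j hji
        set B' := ρ₀.symm '' B with hB'
        set w' := ρ₀.symm w with hw'def
        have hB'E : B' ∈ congruenceEdges M := congruenceEdges_image _ hBE
        have hB'sub : B' ⊆ X j := by
          rintro x ⟨y, hy, rfl⟩
          obtain ⟨z, hz, hzy⟩ := hBsub hy
          rw [← hzy]
          simpa using hz
        have hw'mem : w' ∈ X (i + 1) := by
          obtain ⟨z, hz, hzw⟩ := hw
          rw [hw'def, ← hzw]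
          simpa using hz
        have hw'B : w' ∉ B' := by
          intro hmem
          rcases Nat.eq_zero_or_pos j with hj0 | hjpos
          · subst hj0
            rw [hX0] at hB'sub
            exact Set.disjoint_left.1 (hdisjTY T hT (i + 1) (by omega) (by omega))
              (hB'sub hmem) (by rwa [hXpos (i + 1) (by omega)] at hw'mem)
          · rw [hXpos j hjpos] at hB'sub
            exact Set.disjoint_left.1
              (hdisjYY j (i + 1) hjpos (by omega) (by omega))
              (hB'sub hmem)
              (by rwa [hXpos (i + 1) (by omega)] at hw'mem)
        have hins : insert w' B' ∈ S := by
          apply hSins B' w' hB'E hw'B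
          · rcases Nat.eq_zero_or_pos j with hj0 | hjpos
            · left
              subst hj0
              rw [hX0] at hB'sub
              exact fun x hx => ⟨T, hT, hB'sub hx⟩
            · right
              exact ⟨j, hjpos, by omega, by rwa [hXpos j hjpos] at hB'sub⟩
          · exact ⟨i + 1, by omega, by omega, by rwa [hXpos (i + 1) (by omega)] at hw'mem⟩
        have himg : ρ₀ '' insert w' B' = insert w B := by
          rw [Set.image_insert_eq]
          congr 1
          · exact ρ₀.apply_symm_apply w
          · rw [hB', ← Set.image_comp]
            simp [Function.comp]
        have hedge : insert w B ∈ congruenceEdges S := ⟨insert w' B', hins, ρ₀, himg.symm⟩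
        obtain ⟨x, hx, y, hy, hxy⟩ := hS _ hedge
        have hall : ∀ z ∈ insert w B, φ z = f j := by
          rintro z (rfl | hz)
          · exact hwc
          · exact hBmono z hz
        exact hxy (by rw [hall x hx, hall y hy])
      · push_neg at hsucc
        -- hsucc : ∀ w ∈ ρ₀ '' X (i+1), ∀ j, j ≤ i → φ w ≠ f j
        have hne : Nonempty {c : Fin n // c ≠ f 0} := by
          obtain ⟨c, hc⟩ := Fintype.exists_ne_of_one_lt_card (by simpa using by omega) (f 0)
          exact ⟨⟨c, hc⟩⟩
        obtain ⟨d₀⟩ := hne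
        have hcard : Fintype.card {c : Fin n // c ≠ f 0} = n - 1 := by
          have := Fintype.card_subtype_compl (fun c : Fin n => c = f 0)
          simpa [Fintype.card_subtype_eq] using this
        have emb : {c : Fin n // c ≠ f 0} ≃ Fin (n - 1) := Fintype.equivFinOfCardEq hcard
        set g : EuclideanSpace ℝ (Fin d) → Fin (n - 1) := fun x =>
          emb (if h : φ (ρ₀ (σ (i + 1) x)) ≠ f 0 then ⟨_, h⟩ else d₀) with hg
        obtain ⟨e₁, he₁E, he₁W, he₁mono⟩ := hW g
        obtain ⟨y₀, hy₀⟩ := edge_nonempty hm hMcard he₁E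
        set B := ρ₀ '' (σ (i + 1) '' e₁) with hBdef
        have hBE : B ∈ congruenceEdges M :=
          congruenceEdges_image ρ₀ (congruenceEdges_image (σ (i + 1)) he₁E)
        have hBsub : B ⊆ ρ₀ '' X (i + 1) := by
          rw [hXpos (i + 1) (by omega)]
          exact Set.image_mono (Set.image_mono he₁W)
        have hmemB : ∀ y ∈ e₁, ρ₀ (σ (i + 1) y) ∈ ρ₀ '' X (i + 1) := by
          intro y hy
          rw [hXpos (i + 1) (by omega)]
          exact Set.mem_image_of_mem _ (Set.mem_image_of_mem _ (he₁W hy))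
        have hguard : ∀ y ∈ e₁, φ (ρ₀ (σ (i + 1) y)) ≠ f 0 := by
          intro y hy
          exact hsucc _ (hmemB y hy) 0 (by omega)
        have hval : ∀ y ∈ e₁, φ (ρ₀ (σ (i + 1) y)) = φ (ρ₀ (σ (i + 1) y₀)) := by
          intro y hy
          have hgy := he₁mono y hy y₀ hy₀
          rw [hg] at hgy
          simp only [dif_pos (hguard y hy), dif_pos (hguard y₀ hy₀)] at hgy
          exact congrArg Subtype.val (emb.injective hgy)
        set cN := φ (ρ₀ (σ (i + 1) y₀)) with hcN
        refine ⟨Function.update f (i + 1) cN, ?_, ?_⟩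
        · intro j hj
          rcases Nat.lt_or_ge j (i + 1) with hji | hji
          · obtain ⟨B₂, h1, h2, h3⟩ := hf1 j (by omega)
            exact ⟨B₂, h1, h2, fun x hx => by
              rw [Function.update_of_ne (by omega) _ _]
              exact h3 x hx⟩
          · have hj' : j = i + 1 := by omega
            subst hj'
            refine ⟨B, hBE, hBsub, ?_⟩
            rintro x ⟨y, ⟨z, hz, rfl⟩, rfl⟩
            rw [Function.update_self]
            exact hval z hz
        · intro j j' hjj' hj'
          rcases Nat.lt_or_ge j' (i + 1) with hji | hji
          · intro x hx
            rw [Function.update_of_ne (by omega) _ _]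
            exact hf2 j j' hjj' (by omega) x hx
          · have hj'' : j' = i + 1 := by omega
            subst hj''
            intro x hx
            rw [Function.update_of_ne (by omega) _ _]
            exact hsucc x hx j (by omega)
  obtain ⟨f, hf1, hf2⟩ := key n le_rfl
  have hinj : ∀ j j', j < j' → j' ≤ n → f j ≠ f j' := by
    intro j j' hjj' hj'n heq
    obtain ⟨B, hBE, hBsub, hBmono⟩ := hf1 j' hj'n
    obtain ⟨x, hx⟩ := edge_nonempty hm hMcard hBE
    exact hf2 j j' hjj' hj'n x (hBsub hx) (by rw [hBmono x hx, heq])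
  obtain ⟨a, b, hab, hfab⟩ :=
    Fintype.exists_ne_map_eq_of_card_lt (fun j : Fin (n + 1) => f j) (by simp)
  rcases lt_or_gt_of_ne (fun h : (a : ℕ) = (b : ℕ) => hab (Fin.ext h)) with h | h
  · exact hinj a b h (by omega) hfab
  · exact hinj b a h (by omega) hfab.symm

end Engine

section Main

variable {d : ℕ}

theorem exists_equivalent_higher_uniform' (m : ℕ) (hm : 2 ≤ m)
    (M : Set (Set (EuclideanSpace ℝ (Fin d)))) (hMne : M.Nonempty) (hMfin : M.Finite)
    (hMcard : ∀ T ∈ M, T.ncard = m) :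
    ∃ S : Set (Set (EuclideanSpace ℝ (Fin d))),
      S.Finite ∧ (∀ T ∈ S, T.ncard = m + 1) ∧
        EquivalentHypergraphs (congruenceEdges M) (congruenceEdges S) := by
  classical
  obtain ⟨T₀, hT₀⟩ := hMne
  obtain ⟨p₀, q₀, hp₀, hq₀, hpq₀⟩ := exists_two_points hm (hMcard T₀ hT₀)
  obtain ⟨C₀, φ₀, hC₀fin, hφ₀⟩ := exists_finite_proper hm hMfin hMcard
  set CS : Set Cardinal := {c : Cardinal | ∃ (C : Type) (φ : EuclideanSpace ℝ (Fin d) → C),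
    Cardinal.mk C = c ∧ IsProperColoring (congruenceEdges M) φ} with hCSdef
  have hchrom : chromNum (congruenceEdges M) = sInf CS := rfl
  have hCSne : CS.Nonempty := ⟨Cardinal.mk C₀, C₀, φ₀, rfl, hφ₀⟩
  have hmem : chromNum (congruenceEdges M) ∈ CS := by rw [hchrom]; exact csInf_mem hCSne
  have hlt : chromNum (congruenceEdges M) < Cardinal.aleph0 := by
    have hle : chromNum (congruenceEdges M) ≤ Cardinal.mk C₀ := csInf_le' ⟨C₀, φ₀, rfl, hφ₀⟩
    exact lt_of_le_of_lt hle (Cardinal.lt_aleph0_of_finite C₀)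
  obtain ⟨n, hn⟩ := Cardinal.lt_aleph0.1 hlt
  have hn2 : 2 ≤ n := by
    obtain ⟨C, φ, hmkC, hφ⟩ := hmem
    obtain ⟨x, hx, y, hy, hxy⟩ := hφ T₀ (mem_congruenceEdges_self hT₀)
    have h2 : (2 : Cardinal) ≤ Cardinal.mk C := Cardinal.two_le_iff.2 ⟨_, _, hxy⟩
    rw [hmkC, hn] at h2
    exact_mod_cast h2
  have hmin : ∀ ψ : EuclideanSpace ℝ (Fin d) → Fin (n - 1),
      ¬ IsProperColoring (congruenceEdges M) ψ := by
    intro ψ hψ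
    have hc : (Cardinal.mk (Fin (n - 1))) ∈ CS := ⟨_, ψ, rfl, hψ⟩
    have h2 : chromNum (congruenceEdges M) ≤ Cardinal.mk (Fin (n - 1)) := csInf_le' hc
    rw [hn, Cardinal.mk_fin] at h2
    have h3 : n ≤ n - 1 := by exact_mod_cast h2
    omega
  obtain ⟨W, hWfin, hWprop⟩ :=
    exists_finite_witness (fun e he => edge_finite hm hMcard he) hmin
  -- bound everything
  have hsUfin : (⋃₀ M).Finite := hMfin.sUnion (fun T hT =>
    Set.finite_of_ncard_ne_zero (by rw [hMcard T hT]; omega))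
  obtain ⟨R0, hR0⟩ := isBounded_iff_forall_norm_le.1 (hsUfin.union hWfin).isBounded
  set R := max R0 0 with hRdef
  have hR : ∀ x ∈ (⋃₀ M) ∪ W, ‖x‖ ≤ R := fun x hx => le_trans (hR0 x hx) (le_max_left _ _)
  have hR0' : (0:ℝ) ≤ R := le_max_right _ _
  -- the translation vector
  have hdist : (0:ℝ) < ‖p₀ - q₀‖ := by
    rw [← dist_eq_norm]; exact dist_pos.2 hpq₀
  set v : EuclideanSpace ℝ (Fin d) := ((2 * R + 1) / ‖p₀ - q₀‖) • (p₀ - q₀) with hvdef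
  have hv : ‖v‖ = 2 * R + 1 := by
    rw [hvdef, norm_smul, Real.norm_eq_abs, abs_div, abs_of_pos (by linarith : (0:ℝ) < 2*R+1),
      abs_of_pos hdist, div_mul_cancel₀ _ hdist.ne']
  set σfun : ℕ → (EuclideanSpace ℝ (Fin d) ≃ᵢ EuclideanSpace ℝ (Fin d)) :=
    fun j => IsometryEquiv.addRight ((j : ℝ) • v) with hσdef
  have hσ : ∀ j x, σfun j x = x + (j : ℝ) • v := fun j x => rfl
  -- disjointness
  have hnormin : ∀ (z : EuclideanSpace ℝ (Fin d)), z ∈ (⋃₀ M) ∪ W → ‖z‖ ≤ R := hR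
  have hdisjTY : ∀ T ∈ M, ∀ j, 1 ≤ j → j ≤ n → Disjoint T (σfun j '' W) := by
    intro T hT j hj _
    rw [Set.disjoint_left]
    rintro x hxT ⟨y, hyW, hyx⟩
    have h1 : ‖x‖ ≤ R := hR x (Or.inl ⟨T, hT, hxT⟩)
    have h2 : ‖y‖ ≤ R := hR y (Or.inr hyW)
    have h3 : x - y = (j : ℝ) • v := by rw [← hyx, hσ]; abel
    have h4 : ‖x - y‖ ≤ ‖x‖ + ‖y‖ := norm_sub_le _ _
    rw [h3, norm_smul, Real.norm_eq_abs, abs_of_nonneg (by positivity : (0:ℝ) ≤ (j:ℝ)), hv] at h4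
    have h5 : (1:ℝ) ≤ (j:ℝ) := by exact_mod_cast hj
    nlinarith
  have hdisjYY : ∀ j l, 1 ≤ j → j < l → l ≤ n → Disjoint (σfun j '' W) (σfun l '' W) := by
    intro j l hj hjl _
    rw [Set.disjoint_left]
    rintro x ⟨y, hyW, hyx⟩ ⟨z, hzW, hzx⟩
    have h1 : ‖y‖ ≤ R := hR y (Or.inr hyW)
    have h2 : ‖z‖ ≤ R := hR z (Or.inr hzW)
    have h3 : y - z = ((l : ℝ) - (j : ℝ)) • v := by
      have h0 := hzx.trans hyx.symm  -- σfun l z = σfun j y : z + lv = y + jv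
      rw [hσ, hσ] at h0
      rw [sub_smul]
      have h7 : y = z + (l:ℝ) • v - (j:ℝ) • v := eq_sub_of_add_eq h0.symm
      rw [h7]
      abel
    have h4 : ‖y - z‖ ≤ ‖y‖ + ‖z‖ := norm_sub_le _ _
    have h6 : (1:ℝ) ≤ (l:ℝ) - (j:ℝ) := by
      have : j + 1 ≤ l := hjl
      have := (Nat.cast_le (α := ℝ)).2 this
      push_cast at this
      linarith
    rw [h3, norm_smul, Real.norm_eq_abs, abs_of_nonneg (by linarith), hv] at h4
    nlinarith
  -- define S
  set S : Set (Set (EuclideanSpace ℝ (Fin d))) :=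
    {A | ∃ B w, B ∈ congruenceEdges M ∧ w ∉ B ∧
      (B ⊆ ⋃₀ M ∨ ∃ j, 1 ≤ j ∧ j ≤ n ∧ B ⊆ σfun j '' W) ∧
      (∃ j, 1 ≤ j ∧ j ≤ n ∧ w ∈ σfun j '' W) ∧ A = insert w B} with hSdef
  have hSins : ∀ (B : Set (EuclideanSpace ℝ (Fin d))) (w), B ∈ congruenceEdges M → w ∉ B →
      (B ⊆ ⋃₀ M ∨ ∃ j, 1 ≤ j ∧ j ≤ n ∧ B ⊆ σfun j '' W) →
      (∃ j, 1 ≤ j ∧ j ≤ n ∧ w ∈ σfun j '' W) → insert w B ∈ S :=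
    fun B w h1 h2 h3 h4 => ⟨B, w, h1, h2, h3, h4, rfl⟩
  -- S is finite
  have hKfin : ((⋃₀ M) ∪ ⋃ j ∈ Finset.Icc 1 n, (σfun j '' W)).Finite := by
    apply hsUfin.union
    apply Set.Finite.biUnion (Finset.Icc 1 n).finite_toSet
    exact fun j _ => hWfin.image _
  have hSfin : S.Finite := by
    apply Set.Finite.subset ((hKfin.finite_subsets.prod hKfin).image
      (fun p : Set (EuclideanSpace ℝ (Fin d)) × EuclideanSpace ℝ (Fin d) => insert p.2 p.1))
    rintro A ⟨B, w, hBE, hwB, hBsub, ⟨j, hj1, hjn, hw⟩, rfl⟩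
    refine ⟨(B, w), ⟨?_, ?_⟩, rfl⟩
    · show B ⊆ _
      rcases hBsub with h | ⟨l, hl1, hln, h⟩
      · exact fun x hx => Or.inl (h hx)
      · exact fun x hx => Or.inr (Set.mem_biUnion (Finset.mem_Icc.2 ⟨hl1, hln⟩) (h hx))
    · show w ∈ _
      exact Or.inr (Set.mem_biUnion (Finset.mem_Icc.2 ⟨hj1, hjn⟩) hw)
  -- S has (m+1)-gons
  have hScard : ∀ A ∈ S, A.ncard = m + 1 := by
    rintro A ⟨B, w, hBE, hwB, _, _, rfl⟩
    rw [Set.ncard_insert_of_notMem hwB (edge_finite hm hMcard hBE), edge_ncard hMcard hBE]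
  -- M-proper implies S-proper
  have hMS : ∀ (C : Type) (φ : EuclideanSpace ℝ (Fin d) → C),
      IsProperColoring (congruenceEdges M) φ → IsProperColoring (congruenceEdges S) φ := by
    intro C φ hφ e he
    obtain ⟨A, hA, ρ, rfl⟩ := he
    obtain ⟨B, w, hBE, hwB, _, _, rfl⟩ := hA
    obtain ⟨x, hx, y, hy, hxy⟩ := hφ (ρ '' B) (congruenceEdges_image ρ hBE)
    have hsub : ρ '' B ⊆ ρ '' insert w B := Set.image_mono (Set.subset_insert _ _)
    exact ⟨x, hsub hx, y, hsub hy, hxy⟩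
  -- S-proper (with n colors) implies M-proper
  have hSM : ∀ φ : EuclideanSpace ℝ (Fin d) → Fin n,
      IsProperColoring (congruenceEdges S) φ → IsProperColoring (congruenceEdges M) φ :=
    fun φ hφ => engine hn2 hm hMcard hWprop hdisjTY hdisjYY hSins φ hφ
  -- chromatic number of S
  set CS' : Set Cardinal := {c : Cardinal | ∃ (C : Type) (φ : EuclideanSpace ℝ (Fin d) → C),
    Cardinal.mk C = c ∧ IsProperColoring (congruenceEdges S) φ} with hCS'def
  have hchrom' : chromNum (congruenceEdges S) = sInf CS' := rfl
  obtain ⟨C₁, φ₁, hmk₁, hφ₁⟩ := hmem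
  have hSMfull : ∀ (C : Type) (φ : EuclideanSpace ℝ (Fin d) → C), Cardinal.mk C ≤ (n : Cardinal) →
      IsProperColoring (congruenceEdges S) φ → IsProperColoring (congruenceEdges M) φ := by
    intro C φ hmk hφ
    have hemb : Nonempty (C ↪ Fin n) := by
      rw [← Cardinal.mk_fin n] at hmk
      exact Cardinal.le_def C (Fin n) |>.1 hmk
    obtain ⟨ι⟩ := hemb
    have h1 : IsProperColoring (congruenceEdges S) (ι ∘ φ) :=
      proper_comp_of_injective ι.injective hφ
    exact proper_of_proper_comp (hSM _ h1)
  have hchromS : chromNum (congruenceEdges S) = (n : Cardinal) := by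
    apply le_antisymm
    · rw [hchrom']
      exact csInf_le' (show (n : Cardinal) ∈ CS' from ⟨C₁, φ₁, hmk₁.trans hn, hMS C₁ φ₁ hφ₁⟩)
    · rw [hchrom']
      apply le_csInf (show CS'.Nonempty from ⟨Cardinal.mk C₁, C₁, φ₁, rfl, hMS C₁ φ₁ hφ₁⟩)
      rintro c ⟨C, φ, hmk, hφ⟩
      by_contra hcon
      push_neg at hcon
      have hle : Cardinal.mk C ≤ (n : Cardinal) := by rw [hmk]; exact le_of_lt hcon
      have hMproper := hSMfull C φ hle hφ
      have : chromNum (congruenceEdges M) ≤ c := csInf_le' ⟨C, φ, hmk, hMproper⟩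
      rw [hn] at this
      exact absurd this (not_le.2 hcon)
  refine ⟨S, hSfin, hScard, ?_, ?_⟩
  · rw [hn, hchromS]
  · intro C φ hmk
    refine ⟨hMS C φ, fun hφ => ?_⟩
    exact hSMfull C φ (by rw [hmk, hn]) hφ

end Main

/-- Theorem 3.1: every hypergraph of congruent copies of finitely many `m`-gons in Euclidean
`ℝ^d` is equivalent to a hypergraph of congruent copies of finitely many `(m+1)`-gons. -/
theorem exists_equivalent_higher_uniform (d m : ℕ) (hm : 2 ≤ m)
    (M : Set (Set (EuclideanSpace ℝ (Fin d)))) (hMne : M.Nonempty) (hMfin : M.Finite)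
    (hMcard : ∀ T ∈ M, T.ncard = m) :
    ∃ S : Set (Set (EuclideanSpace ℝ (Fin d))),
      S.Finite ∧ (∀ T ∈ S, T.ncard = m + 1) ∧
        EquivalentHypergraphs (congruenceEdges M) (congruenceEdges S) :=
  exists_equivalent_higher_uniform' m hm M hMne hMfin hMcard
end

section
/- For every integer m ≥ 2 there exists a finite set S of unit m-gons in Euclidean ℝ^d such that the hypergraph H(S) on vertex set ℝ^d, whose edges are all subsets of ℝ^d congruent in ℝ^d to some element of S, is equivalent to the Euclidean unit distance graph (ℝ^d, 1). -/
/-- The edge set of the Euclidean unit distance graph `(ℝ^d, 1)`, viewed as a hypergraph. -/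
def unitDistEdges (d : ℕ) : Set (Set (EuclideanSpace ℝ (Fin d))) :=
  {e | ∃ x y : EuclideanSpace ℝ (Fin d), ‖x - y‖ = 1 ∧ e = {x, y}}

/-!
Let `k + 1` be the chromatic number of the unit distance graph `G` of `ℝ^d`; it is finite
because a periodic colouring of small cubes is proper. By the de Bruijn–Erdős theorem some
finite `P ⊆ ℝ^d` is not `k`-colourable, so under a colouring with at most `k + 1` colours every
translate of `P` contains a point of any prescribed colour `c` or a monochromatic unit pair.
Let `X` consist of a unit pair `{a, b}` and many pairwise disjoint translates of `P`, and let
`a` and `b` get the same colour `c`. Pick in each translate a point of colour `c` or an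
endpoint of a monochromatic unit pair; by pigeonhole, at least `m` of these points share a
colour. Their colour class in `X` contains a unit pair: `{a, b}` if the colour is `c`, a
monochromatic pair of a translate otherwise. So `X` contains a monochromatic unit `m`-gon.

Let `S` be the set of unit `m`-gons contained in `X`. Moving `a, b` onto an arbitrary unit pair
by an isometry, a colouring with at most `k + 1` colours that is proper for `H(S)` is proper for
`G`; conversely every colouring proper for `G` is proper for `H(S)`, since each member of `S`
contains a unit pair. This yields equal chromatic numbers and equal proper colourings.
-/

open Pointwise

theorem Cardinal.exists_fintype_card_le_of_mk_le {C : Type*} {n : ℕ} (h : Cardinal.mk C ≤ n) :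
    ∃ _ : Fintype C, Fintype.card C ≤ n := by
  obtain ⟨_⟩ := Cardinal.lt_aleph0_iff_fintype.1 (h.trans_lt Cardinal.natCast_lt_aleph0)
  exact ⟨inferInstance, by exact_mod_cast (Cardinal.mk_fintype C).symm.trans_le h⟩

theorem Int.floor_mul_eq_of_intCast_eq {u v : ℝ} {N : ℕ} (huv : |u - v| ≤ 1)
    (h : ((⌊u * N⌋ : ℤ) : ZMod (N + 1)) = ⌊v * N⌋) : ⌊u * N⌋ = ⌊v * N⌋ := by
  rw [ZMod.intCast_eq_intCast_iff_dvd_sub] at h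
  obtain ⟨h₁, h₂⟩ : -(N : ℝ) ≤ u * N - v * N ∧ u * N - v * N ≤ N := by
    rw [← abs_le, ← sub_mul, abs_mul, Nat.abs_cast]
    exact mul_le_of_le_one_left N.cast_nonneg huv
  have hlt : |⌊v * N⌋ - ⌊u * N⌋| < ((N + 1 : ℕ) : ℤ) := by
    have : ((|⌊v * N⌋ - ⌊u * N⌋| : ℤ) : ℝ) < N + 1 := by
      push_cast
      rw [abs_lt]
      constructor <;> linarith [Int.floor_le (u * N), Int.lt_floor_add_one (u * N),
        Int.floor_le (v * N), Int.lt_floor_add_one (v * N)]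
    exact_mod_cast this
  exact (sub_eq_zero.1 (Int.eq_zero_of_abs_lt_dvd h hlt)).symm

theorem exists_isometryEquiv_map_pair {E : Type*} [NormedAddCommGroup E] [InnerProductSpace ℝ E]
    {a b x y : E} (h : dist a b = dist x y) : ∃ ρ : E ≃ᵢ E, ρ a = x ∧ ρ b = y := by
  have hnorm : ‖b - a‖ = ‖y - x‖ := by rw [← dist_eq_norm, dist_comm, h, dist_comm, dist_eq_norm]
  let L := Submodule.reflection (ℝ ∙ ((b - a) - (y - x)))ᗮ
  refine ⟨(IsometryEquiv.subRight a).trans (L.toIsometryEquiv.trans (IsometryEquiv.addRight x)),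
    by simp, ?_⟩
  simp [L, Submodule.reflection_sub hnorm]

theorem Finset.exists_pairwiseDisjoint_vadd {V : Type*} [AddGroup V] [Infinite V] [DecidableEq V]
    (P : Finset V) (N : ℕ) :
    ∃ s : Finset V, s.card = N ∧ (s : Set V).PairwiseDisjoint (· +ᵥ P) := by
  induction N with
  | zero => exact ⟨∅, rfl, by simp⟩
  | succ N ih =>
    obtain ⟨s, hs, hdisj⟩ := ih
    obtain ⟨t, ht⟩ := Infinite.exists_notMem_finset (s ∪ (s + (P - P)))
    rw [Finset.mem_union, not_or] at ht
    refine ⟨insert t s, by rw [Finset.card_insert_of_notMem ht.1, hs], ?_⟩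
    rw [Finset.coe_insert]
    refine hdisj.insert fun u hu _ => Finset.disjoint_left.2 fun x hxt hxu => ?_
    obtain ⟨z, hz, rfl⟩ := Finset.mem_vadd_finset.1 hxt
    obtain ⟨w, hw, hwz⟩ := Finset.mem_vadd_finset.1 hxu
    have htu : t = u + (w - z) := by rw [← add_sub_assoc]; exact eq_sub_of_add_eq hwz.symm
    exact ht.2 (htu ▸ Finset.add_mem_add hu (Finset.sub_mem_sub hw hz))

namespace SimpleGraph

variable {V : Type*} {G : SimpleGraph V}

theorem colorable_of_forall_finset_induce_colorable {n : ℕ}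
    (h : ∀ s : Finset V, (G.induce (s : Set V)).Colorable n) : G.Colorable n := by
  classical
  obtain ⟨χ, hχ⟩ := Finset.rado_selection_subtype (β := fun _ => Fin n)
    fun s x => (h s).some x
  refine ⟨Coloring.mk χ fun {x y} hxy => ?_⟩
  obtain ⟨t, hst, ht⟩ := hχ {x, y}
  rw [ht ⟨x, by simp⟩, ht ⟨y, by simp⟩]
  exact (h t).some.valid (induce_adj.2 hxy)

theorem exists_colorable_succ_not_colorable [Nonempty V] {n : ℕ} (h : G.Colorable n) :
    ∃ k, G.Colorable (k + 1) ∧ ¬ G.Colorable k := by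
  induction n with
  | zero => exact absurd (colorable_zero_iff.1 h) (not_isEmpty_of_nonempty V)
  | succ n ih =>
    by_cases hn : G.Colorable n
    exacts [ih hn, ⟨n, h, hn⟩]

theorem exists_subset_card_eq_of_adj {Y : Finset V} {m : ℕ} (hY : ∃ p ∈ Y, ∃ q ∈ Y, G.Adj p q)
    (hm : 2 ≤ m) (hmY : m ≤ Y.card) :
    ∃ T ⊆ Y, T.card = m ∧ ∃ p ∈ T, ∃ q ∈ T, G.Adj p q := by
  classical
  obtain ⟨p, hp, q, hq, hpq⟩ := hY
  obtain ⟨T, hpqT, hTY, hT⟩ := Finset.exists_subsuperset_card_eq (n := m)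
    (Finset.insert_subset hp (Finset.singleton_subset_iff.2 hq))
    ((Finset.card_pair hpq.ne).trans_le hm) hmY
  exact ⟨T, hTY, hT, p, hpqT (by simp), q, hpqT (by simp), hpq⟩

theorem exists_monochromatic_adj_of_pairwiseDisjoint [DecidableEq V] {ι C : Type*} [Fintype C]
    {ψ : V → C} {a b : V} (hab : G.Adj a b) (hψab : ψ a = ψ b)
    {Q : ι → Finset V} {s : Finset ι} (hQ : (s : Set ι).PairwiseDisjoint Q) {m : ℕ}
    (hs : Fintype.card C * (m - 1) < s.card)
    (hQψ : ∀ i ∈ s, ∃ w ∈ Q i, ψ w = ψ a ∨ ∃ q ∈ Q i, G.Adj w q ∧ ψ w = ψ q) :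
    ∃ Y ⊆ insert a (insert b (s.biUnion Q)), m ≤ Y.card ∧ (∃ p ∈ Y, ∃ q ∈ Y, G.Adj p q) ∧
      ∃ c, ∀ z ∈ Y, ψ z = c := by
  classical
  set X := insert a (insert b (s.biUnion Q))
  have hQX : ∀ i ∈ s, Q i ⊆ X := fun i hi _ hz =>
    Finset.mem_insert_of_mem (Finset.mem_insert_of_mem (Finset.mem_biUnion.2 ⟨i, hi, hz⟩))
  have : Nonempty V := ⟨a⟩
  choose! w hwQ hw using hQψ
  obtain ⟨c, -, hc⟩ := Finset.exists_lt_card_fiber_of_mul_lt_card_of_maps_to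
    (f := fun i => ψ (w i)) (t := Finset.univ) (fun _ _ => Finset.mem_univ _)
    (by rwa [Finset.card_univ])
  set F := {i ∈ s | ψ (w i) = c}
  have hFs : F ⊆ s := Finset.filter_subset _ _
  refine ⟨{z ∈ X | ψ z = c}, Finset.filter_subset _ _, ?_, ?_, c,
    fun z hz => (Finset.mem_filter.1 hz).2⟩
  · have hinj : Set.InjOn w F := fun i hi j hj hij =>
      hQ.elim_finset (hFs hi) (hFs hj) _ (hwQ i (hFs hi)) (hij ▸ hwQ j (hFs hj))
    calc m ≤ F.card := by omega
      _ = (F.image w).card := (Finset.card_image_of_injOn hinj).symm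
      _ ≤ _ := Finset.card_le_card fun z hz => by
        obtain ⟨i, hi, rfl⟩ := Finset.mem_image.1 hz
        exact Finset.mem_filter.2 ⟨hQX i (hFs hi) (hwQ i (hFs hi)), (Finset.mem_filter.1 hi).2⟩
  · by_cases hca : ψ a = c
    · exact ⟨a, by simp [X, hca], b, by simp [X, ← hψab, hca], hab⟩
    obtain ⟨i, hi⟩ : F.Nonempty := Finset.card_pos.1 (by omega)
    obtain ⟨his, hic⟩ := Finset.mem_filter.1 hi
    obtain ⟨q, hq, hwq, hwq'⟩ := (hw i his).resolve_left (hic ▸ fun h => hca h.symm)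
    exact ⟨w i, Finset.mem_filter.2 ⟨hQX i his (hwQ i his), hic⟩, q,
      Finset.mem_filter.2 ⟨hQX i his hq, hwq' ▸ hic⟩, hwq⟩

theorem exists_eq_or_adj_eq_of_not_colorable [AddGroup V] [DecidableEq V] {C : Type*}
    [Fintype C] (hG : ∀ t {x y : V}, G.Adj x y → G.Adj (t + x) (t + y))
    {P : Finset V} {k : ℕ} (hP : ¬ (G.induce (P : Set V)).Colorable k)
    (hC : Fintype.card C ≤ k + 1) (ψ : V → C) (c : C) (t : V) :
    ∃ w ∈ t +ᵥ P, ψ w = c ∨ ∃ q ∈ t +ᵥ P, G.Adj w q ∧ ψ w = ψ q := by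
  classical
  by_contra! h
  let col : (G.induce (P : Set V)).Coloring {x // x ≠ c} :=
    Coloring.mk (fun z => ⟨ψ (t + z), (h _ (Finset.vadd_mem_vadd_finset z.2)).1⟩)
      fun {z w} hzw => by
        simpa using (h _ (Finset.vadd_mem_vadd_finset z.2)).2 _
          (Finset.vadd_mem_vadd_finset w.2) (hG t (induce_adj.1 hzw))
  refine hP (col.colorable.mono ?_)
  simp only [ne_eq, Fintype.card_subtype_compl, Fintype.card_unique]
  omega

theorem exists_finset_forall_monochromatic_adj [AddGroup V] [Infinite V]
    (hG : ∀ t {x y : V}, G.Adj x y → G.Adj (t + x) (t + y))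
    {P : Finset V} {k : ℕ} (hP : ¬ (G.induce (P : Set V)).Colorable k)
    {a b : V} (hab : G.Adj a b) {m : ℕ} (hm : 2 ≤ m) :
    ∃ X : Finset V, ∀ (C : Type*) [Fintype C], Fintype.card C ≤ k + 1 → ∀ ψ : V → C,
      ψ a = ψ b → ∃ T ⊆ X, T.card = m ∧ (∃ p ∈ T, ∃ q ∈ T, G.Adj p q) ∧ ∃ c, ∀ z ∈ T, ψ z = c := by
  classical
  obtain ⟨s, hs, hdisj⟩ := Finset.exists_pairwiseDisjoint_vadd P ((k + 1) * (m - 1) + 1)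
  refine ⟨insert a (insert b (s.biUnion (· +ᵥ P))), fun C _ hC ψ hψ => ?_⟩
  obtain ⟨Y, hYX, hmY, hadj, c, hc⟩ := exists_monochromatic_adj_of_pairwiseDisjoint hab hψ hdisj
    (by rw [hs]; exact Nat.lt_succ_of_le (Nat.mul_le_mul_right _ hC))
    fun t _ => exists_eq_or_adj_eq_of_not_colorable hG hP hC ψ (ψ a) t
  obtain ⟨T, hTY, hT, hTadj⟩ := exists_subset_card_eq_of_adj hadj hm hmY
  exact ⟨T, hTY.trans hYX, hT, hTadj, c, fun z hz => hc z (hTY hz)⟩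

end SimpleGraph

section UnitDistGraph

variable {E : Type*} [SeminormedAddCommGroup E]

variable (E) in
def unitDistGraph : SimpleGraph E where
  Adj x y := ‖x - y‖ = 1
  symm := ⟨fun x y h => by rwa [norm_sub_rev]⟩
  loopless := ⟨fun x h => by simp at h⟩

@[simp]
theorem unitDistGraph_adj {x y : E} : (unitDistGraph E).Adj x y ↔ ‖x - y‖ = 1 := Iff.rfl

theorem unitDistGraph_adj_add_left (t : E) {x y : E} (h : (unitDistGraph E).Adj x y) :
    (unitDistGraph E).Adj (t + x) (t + y) := by
  simpa using h

end UnitDistGraph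

-- Colour the cubes of side `1 / (d + 1)` by their integer coordinates mod `d + 2`: a cube has
-- diameter `< 1`, and distinct cubes of the same colour are more than `1` apart in some
-- coordinate.
theorem unitDistGraph_euclideanSpace_colorable (d : ℕ) :
    (unitDistGraph (EuclideanSpace ℝ (Fin d))).Colorable ((d + 2) ^ d) := by
  let N := d + 1
  have hvalid : ∀ x y : EuclideanSpace ℝ (Fin d), ‖x - y‖ = 1 →
      (fun i => ((⌊x i * N⌋ : ℤ) : ZMod (N + 1))) ≠ fun i => ((⌊y i * N⌋ : ℤ) : ZMod (N + 1)) := by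
    intro x y hxy hcol
    have hclose : ∀ i, (x i - y i) ^ 2 ≤ 1 / N ^ 2 := by
      intro i
      have hfl := Int.floor_mul_eq_of_intCast_eq
        ((PiLp.norm_apply_le (x - y) i).trans_eq hxy) (congrFun hcol i)
      have := Int.abs_sub_lt_one_of_floor_eq_floor hfl
      rw [← sub_mul, abs_mul, Nat.abs_cast, ← lt_div_iff₀ (by positivity)] at this
      rw [← sq_abs, one_div, ← inv_pow]
      exact pow_le_pow_left₀ (abs_nonneg _) (by simpa using this.le) 2
    have : ‖x - y‖ ^ 2 < 1 := by
      rw [EuclideanSpace.real_norm_sq_eq]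
      calc ∑ i, (x - y) i ^ 2 ≤ ∑ _i : Fin d, 1 / (N : ℝ) ^ 2 :=
            Finset.sum_le_sum fun i _ => hclose i
        _ = d / (d + 1) ^ 2 := by
          simp only [Finset.sum_const, Finset.card_univ, Fintype.card_fin, nsmul_eq_mul, N]
          push_cast
          ring
        _ < 1 := by rw [div_lt_one (by positivity)]; nlinarith
    simp [hxy] at this
  simpa [N] using (SimpleGraph.Coloring.mk _ fun {x y} h => hvalid x y h).colorable

theorem chromNum_le_of_isProperColoring {V C : Type} {E : Set (Set V)} {φ : V → C}
    (hφ : IsProperColoring E φ) : chromNum E ≤ Cardinal.mk C :=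
  csInf_le (OrderBot.bddBelow _) ⟨C, φ, rfl, hφ⟩

theorem equivalentHypergraphs_of_isProperColoring_imp {V : Type} {E₁ E₂ : Set (Set V)}
    (hne : ∃ (C : Type) (φ : V → C), IsProperColoring E₂ φ)
    (h₂₁ : ∀ {C : Type} {φ : V → C}, IsProperColoring E₂ φ → IsProperColoring E₁ φ)
    (h₁₂ : ∀ {C : Type} {φ : V → C}, Cardinal.mk C ≤ chromNum E₂ →
      IsProperColoring E₁ φ → IsProperColoring E₂ φ) :
    EquivalentHypergraphs E₁ E₂ := by
  obtain ⟨C₀, φ₀, hC₀, hφ₀⟩ : chromNum E₂ ∈ _ :=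
    csInf_mem (by obtain ⟨C, φ, hφ⟩ := hne; exact ⟨_, C, φ, rfl, hφ⟩)
  have hχ : chromNum E₁ = chromNum E₂ := by
    refine le_antisymm (hC₀ ▸ chromNum_le_of_isProperColoring (h₂₁ hφ₀)) ?_
    refine le_csInf ⟨_, C₀, φ₀, rfl, h₂₁ hφ₀⟩ ?_
    rintro _ ⟨C, φ, rfl, hφ⟩
    by_contra! hlt
    exact hlt.not_ge (chromNum_le_of_isProperColoring (h₁₂ hlt.le hφ))
  exact ⟨hχ, fun C φ hC => ⟨h₁₂ (hC.trans hχ).le, h₂₁⟩⟩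

theorem isProperColoring_unitDistEdges_iff {d : ℕ} {C : Type} {φ : EuclideanSpace ℝ (Fin d) → C} :
    IsProperColoring (unitDistEdges d) φ ↔ ∀ x y, (unitDistGraph _).Adj x y → φ x ≠ φ y := by
  refine ⟨fun hφ x y hxy hxy' => ?_, ?_⟩
  · obtain ⟨a, ha, b, hb, hab⟩ := hφ _ ⟨x, y, hxy, rfl⟩
    rcases ha with rfl | rfl <;> rcases hb with rfl | rfl <;> simp [hxy'] at hab
  · rintro h _ ⟨x, y, hxy, rfl⟩
    exact ⟨x, by simp, y, by simp, h x y hxy⟩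

theorem congruenceEdges_empty {d : ℕ} :
    congruenceEdges (∅ : Set (Set (EuclideanSpace ℝ (Fin d)))) = ∅ := by
  simp [congruenceEdges]

theorem unitDistEdges_zero : unitDistEdges 0 = ∅ :=
  Set.eq_empty_of_forall_notMem fun _ ⟨x, y, hxy, _⟩ => by simp [Subsingleton.elim x y] at hxy

theorem isProperColoring_congruenceEdges_of_unitDistEdges {d : ℕ}
    {S : Set (Set (EuclideanSpace ℝ (Fin d)))} (hS : ∀ T ∈ S, ∃ x ∈ T, ∃ y ∈ T, ‖x - y‖ = 1)
    {C : Type} {φ : EuclideanSpace ℝ (Fin d) → C} (hφ : IsProperColoring (unitDistEdges d) φ) :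
    IsProperColoring (congruenceEdges S) φ := by
  rintro _ ⟨T, hT, ρ, rfl⟩
  obtain ⟨x, hx, y, hy, hxy⟩ := hS T hT
  refine ⟨ρ x, Set.mem_image_of_mem ρ hx, ρ y, Set.mem_image_of_mem ρ hy,
    isProperColoring_unitDistEdges_iff.1 hφ _ _ ?_⟩
  rw [unitDistGraph_adj, ← dist_eq_norm, ρ.dist_eq, dist_eq_norm, hxy]

def unitMGonsIn {E : Type*} [SeminormedAddCommGroup E] (X : Finset E) (m : ℕ) : Set (Set E) :=
  {T | T ⊆ X ∧ T.ncard = m ∧ ∃ x ∈ T, ∃ y ∈ T, ‖x - y‖ = 1}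

theorem isProperColoring_unitDistEdges_of_congruenceEdges {d m : ℕ}
    {X : Finset (EuclideanSpace ℝ (Fin d))} {a b : EuclideanSpace ℝ (Fin d)} (hab : ‖a - b‖ = 1)
    {C : Type} (hX : ∀ ψ : EuclideanSpace ℝ (Fin d) → C, ψ a = ψ b → ∃ T ⊆ X, T.card = m ∧
      (∃ p ∈ T, ∃ q ∈ T, ‖p - q‖ = 1) ∧ ∃ c, ∀ z ∈ T, ψ z = c)
    {φ : EuclideanSpace ℝ (Fin d) → C}
    (hφ : IsProperColoring (congruenceEdges (unitMGonsIn X m)) φ) :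
    IsProperColoring (unitDistEdges d) φ := by
  refine isProperColoring_unitDistEdges_iff.2 fun x y hxy hφxy => ?_
  obtain ⟨ρ, rfl, rfl⟩ := exists_isometryEquiv_map_pair
    (show dist a b = dist x y by rw [dist_eq_norm, dist_eq_norm, hab]; exact Eq.symm hxy)
  obtain ⟨T, hTX, hT, hTunit, c, hc⟩ := hX (φ ∘ ρ) hφxy
  have hedge : ρ '' T ∈ congruenceEdges (unitMGonsIn X m) :=
    ⟨T, ⟨Finset.coe_subset.2 hTX, by rw [Set.ncard_coe_finset, hT], hTunit⟩, ρ, rfl⟩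
  obtain ⟨_, ⟨u, hu, rfl⟩, _, ⟨v, hv, rfl⟩, huv⟩ := hφ _ hedge
  exact huv ((hc u hu).trans (hc v hv).symm)

/-- Corollary 3.1.1: for every `m ≥ 2` there is a finite set `S` of unit `m`-gons in
Euclidean `ℝ^d` such that `H(S)` is equivalent to the Euclidean unit distance graph. -/
theorem exists_unit_mgon_hypergraph_equivalent_to_unit_distance_graph (d m : ℕ) (hm : 2 ≤ m) :
    ∃ S : Set (Set (EuclideanSpace ℝ (Fin d))),
      S.Finite ∧
        (∀ T ∈ S, T.ncard = m ∧ ∃ x ∈ T, ∃ y ∈ T, ‖x - y‖ = 1) ∧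
        EquivalentHypergraphs (congruenceEdges S) (unitDistEdges d) := by
  rcases Nat.eq_zero_or_pos d with rfl | hd
  · refine ⟨∅, Set.finite_empty, by simp, ?_⟩
    rw [congruenceEdges_empty, unitDistEdges_zero]
    exact ⟨rfl, fun _ _ _ => Iff.rfl⟩
  have : Nonempty (Fin d) := ⟨⟨0, hd⟩⟩
  let G := unitDistGraph (EuclideanSpace ℝ (Fin d))
  obtain ⟨k, hk, hk'⟩ :=
    G.exists_colorable_succ_not_colorable (unitDistGraph_euclideanSpace_colorable d)
  obtain ⟨P, hP⟩ : ∃ P : Finset (EuclideanSpace ℝ (Fin d)), ¬ (G.induce ↑P).Colorable k := by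
    by_contra! h
    exact hk' (SimpleGraph.colorable_of_forall_finset_induce_colorable h)
  let e : EuclideanSpace ℝ (Fin d) := EuclideanSpace.single ⟨0, hd⟩ 1
  have he : ‖e - 0‖ = 1 := by simp [e]
  obtain ⟨X, hX⟩ := G.exists_finset_forall_monochromatic_adj
    unitDistGraph_adj_add_left hP (a := e) (b := 0) he hm
  have hproper : IsProperColoring (unitDistEdges d) hk.some :=
    isProperColoring_unitDistEdges_iff.2 fun _ _ h => hk.some.valid h
  refine ⟨unitMGonsIn X m, X.finite_toSet.finite_subsets.subset fun T hT => hT.1,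
    fun T hT => hT.2, equivalentHypergraphs_of_isProperColoring_imp ⟨_, _, hproper⟩
      (isProperColoring_congruenceEdges_of_unitDistEdges fun T hT => hT.2.2)
      fun {C φ} hC hφ => ?_⟩
  obtain ⟨_, hCk⟩ := Cardinal.exists_fintype_card_le_of_mk_le
    ((hC.trans (chromNum_le_of_isProperColoring hproper)).trans_eq (Cardinal.mk_fin (k + 1)))
  exact isProperColoring_unitDistEdges_of_congruenceEdges he (hX C hCk) hφ
end

section
/- Let M be a nonempty finite set of finite subsets of Euclidean ℝ^d, each of cardinality at least 2, with |M| = n, and let H(M) be the hypergraph on vertex set ℝ^d whose edges are all subsets of ℝ^d congruent in ℝ^d to some T ∈ M. Then χ(H(M)) ≤ χ(ℝ^d, 1)^n; in particular, if χ(ℝ^d, 1) is finite then χ(H(M)) is finite. -/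
/-- If `M` is a nonempty finite set of `n` finite subsets of Euclidean `ℝ^d`, each of
cardinality at least 2, then `χ(H(M)) ≤ χ(ℝ^d, 1)^n`; in particular `χ(H(M))` is finite
whenever `χ(ℝ^d, 1)` is. -/
theorem chromNum_congruenceEdges_le_pow (d n : ℕ)
    (M : Set (Set (EuclideanSpace ℝ (Fin d)))) (hMne : M.Nonempty) (hMfin : M.Finite)
    (hMn : M.ncard = n) (hMcard : ∀ T ∈ M, T.Finite ∧ 2 ≤ T.ncard) :
    chromNum (congruenceEdges M) ≤ chromNum (unitDistEdges d) ^ n ∧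
      (chromNum (unitDistEdges d) < Cardinal.aleph0 →
        chromNum (congruenceEdges M) < Cardinal.aleph0) := by
  classical
  -- The set defining the unit-distance chromatic number is nonempty (identity coloring).
  have hne : {c : Cardinal | ∃ (C : Type) (φ : EuclideanSpace ℝ (Fin d) → C),
      Cardinal.mk C = c ∧ IsProperColoring (unitDistEdges d) φ}.Nonempty := by
    refine ⟨Cardinal.mk (EuclideanSpace ℝ (Fin d)), EuclideanSpace ℝ (Fin d), id, rfl, ?_⟩
    rintro e ⟨x, y, hxy, rfl⟩
    have hne' : x ≠ y := by
      intro h; rw [h, sub_self, norm_zero] at hxy; norm_num at hxy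
    exact ⟨x, by simp, y, by simp, hne'⟩
  obtain ⟨C, φ, hC, hφ⟩ := csInf_mem hne
  -- For each T ∈ M, choose two distinct points.
  have hpick : ∀ T : M, ∃ a b, a ∈ T.1 ∧ b ∈ T.1 ∧ a ≠ b := by
    rintro ⟨T, hT⟩
    exact (Set.one_lt_ncard_iff (hMcard T hT).1).mp (by have := (hMcard T hT).2; omega)
  choose a b ha hb hab using hpick
  set r : M → ℝ := fun T => ‖a T - b T‖ with hr
  have hrpos : ∀ T, 0 < r T := fun T => norm_pos_iff.mpr (sub_ne_zero.mpr (hab T))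
  -- The product coloring.
  set ψ : EuclideanSpace ℝ (Fin d) → (M → C) := fun x T => φ ((r T)⁻¹ • x) with hψdef
  have hψ : IsProperColoring (congruenceEdges M) ψ := by
    rintro e ⟨T, hT, ρ, rfl⟩
    set T' : M := ⟨T, hT⟩
    refine ⟨ρ (a T'), ⟨a T', ha T', rfl⟩, ρ (b T'), ⟨b T', hb T', rfl⟩, ?_⟩
    intro hEq
    have hcomp := congrFun hEq T'
    simp only [hψdef] at hcomp
    set u := (r T')⁻¹ • ρ (a T')
    set v := (r T')⁻¹ • ρ (b T')
    have h1 : ‖u - v‖ = 1 := by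
      have hdist : ‖ρ (a T') - ρ (b T')‖ = r T' := by
        have := ρ.isometry.dist_eq (a T') (b T')
        rwa [dist_eq_norm, dist_eq_norm] at this
      rw [show u - v = (r T')⁻¹ • (ρ (a T') - ρ (b T')) by rw [smul_sub],
        norm_smul, hdist, norm_inv, Real.norm_eq_abs,
        abs_of_pos (hrpos T'), inv_mul_cancel₀ (hrpos T').ne']
    obtain ⟨x, hx, y, hy, hxy⟩ := hφ {u, v} ⟨u, v, h1, rfl⟩
    have huv : φ u = φ v := hcomp
    rcases hx with rfl | rfl <;> rcases hy with rfl | rfl <;> simp_all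
  have hle : chromNum (congruenceEdges M) ≤ Cardinal.mk (M → C) :=
    csInf_le' ⟨M → C, ψ, rfl, hψ⟩
  have hmkM : Cardinal.mk M = (n : Cardinal) := by
    have : Fintype M := hMfin.fintype
    rw [Cardinal.mk_fintype, ← Nat.card_eq_fintype_card, Nat.card_coe_set_eq, hMn]
  have hpow : Cardinal.mk (M → C) = chromNum (unitDistEdges d) ^ n := by
    rw [← Cardinal.power_def, hmkM, Cardinal.power_natCast, hC]
    rfl
  constructor
  · rw [← hpow]; exact hle
  · intro hlt
    calc chromNum (congruenceEdges M) ≤ chromNum (unitDistEdges d) ^ n := by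
          rw [← hpow]; exact hle
      _ < Cardinal.aleph0 := Cardinal.power_lt_aleph0 hlt (Cardinal.nat_lt_aleph0 n)
end

section
/- For every norm ‖·‖ on ℝ^d, the chromatic number χ((ℝ^d, ‖·‖), 1) of the unit distance graph on (ℝ^d, ‖·‖) is finite. -/
/-- The chromatic number of the distance-`a` graph on `ℝ^d` equipped with the
(semi)norm `N`: the smallest cardinality of a color set `C` admitting a coloring
`φ : ℝ^d → C` that forbids the distance `a`. -/
noncomputable def distChromNum (d : ℕ) (N : Seminorm ℝ (Fin d → ℝ)) (a : ℝ) : Cardinal :=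
  sInf {c : Cardinal | ∃ (C : Type) (φ : (Fin d → ℝ) → C),
    Cardinal.mk C = c ∧ ∀ x y : Fin d → ℝ, N (x - y) = a → φ x ≠ φ y}

/-!
Being a norm on a finite-dimensional space, `N` is equivalent to the sup norm:
`c * ‖x‖ ≤ N x ≤ C * ‖x‖` with `0 < c, C`. Cut `ℝ^d` into half-open cubes of side `1 / C`, each
of `N`-diameter less than `1`, and color a cube by its integer coordinates modulo
`k = ⌈C / c⌉₊ + 1`. Two points in distinct cubes of the same color differ by more than
`(k - 1) / C ≥ 1 / c` in some coordinate, so their `N`-distance exceeds `1`.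
-/

theorem distChromNum_le_mk {d : ℕ} {N : Seminorm ℝ (Fin d → ℝ)} {a : ℝ} {C : Type}
    (φ : (Fin d → ℝ) → C) (hφ : ∀ x y, N (x - y) = a → φ x ≠ φ y) :
    distChromNum d N a ≤ Cardinal.mk C :=
  csInf_le' ⟨C, φ, rfl, hφ⟩

namespace Seminorm

theorem exists_pos_le_mul_norm_pi {ι : Type*} [Fintype ι] (N : Seminorm ℝ (ι → ℝ)) :
    ∃ C > 0, ∀ x, N x ≤ C * ‖x‖ := by
  classical
  set S := ∑ i, N (Pi.single i 1)
  refine ⟨S + 1, by positivity, fun x => ?_⟩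
  calc N x = N (∑ i, x i • Pi.single i 1) := by
        simp only [← Pi.single_smul, smul_eq_mul, mul_one, Finset.univ_sum_single]
    _ ≤ ∑ i, N (x i • Pi.single i 1) :=
        Finset.le_sum_of_subadditive N (map_zero N).le (map_add_le_add N) _ _
    _ = ∑ i, ‖x i‖ * N (Pi.single i 1) := by simp only [map_smul_eq_mul]
    _ ≤ ∑ i, ‖x‖ * N (Pi.single i 1) := by gcongr with i; exact norm_le_pi_norm x i
    _ ≤ (S + 1) * ‖x‖ := by rw [← Finset.mul_sum]; nlinarith [norm_nonneg x]

theorem continuous_of_le_mul_norm {E : Type*} [SeminormedAddCommGroup E] [NormedSpace ℝ E]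
    (N : Seminorm ℝ E) {C : ℝ} (hC : ∀ x, N x ≤ C * ‖x‖) : Continuous N :=
  (LipschitzWith.of_dist_le' (K := C) fun x y => by
    simpa only [Real.dist_eq, dist_eq_norm, Real.norm_eq_abs] using
      (abs_sub_map_le_sub N x y).trans (hC _)).continuous

/-- The minimum of `N` on the (compact) unit sphere is the constant. -/
theorem exists_pos_mul_norm_le {E : Type*} [NormedAddCommGroup E] [NormedSpace ℝ E]
    [ProperSpace E] (N : Seminorm ℝ E) (hcont : Continuous N) (hN : ∀ x, N x = 0 → x = 0) :
    ∃ c > 0, ∀ x, c * ‖x‖ ≤ N x := by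
  rcases subsingleton_or_nontrivial E with hE | hE
  · exact ⟨1, one_pos, fun x => by simp [Subsingleton.elim x 0]⟩
  obtain ⟨x₀, hx₀, hmin⟩ := (isCompact_sphere (0 : E) 1).exists_isMinOn
    (NormedSpace.sphere_nonempty.mpr zero_le_one) hcont.continuousOn
  have hx₀_ne : x₀ ≠ 0 := ne_zero_of_mem_unit_sphere ⟨x₀, hx₀⟩
  refine ⟨N x₀, (apply_nonneg N x₀).lt_of_ne fun h => hx₀_ne (hN x₀ h.symm), fun x => ?_⟩
  rcases eq_or_ne x 0 with rfl | hx
  · simp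
  have hx_pos : 0 < ‖x‖ := norm_pos_iff.mpr hx
  have hunit : ‖x‖⁻¹ • x ∈ Metric.sphere (0 : E) 1 := by simp [norm_smul, hx_pos.ne']
  calc N x₀ * ‖x‖ ≤ N (‖x‖⁻¹ • x) * ‖x‖ := by gcongr; exact hmin hunit
    _ = N x := by
      rw [map_smul_eq_mul, norm_inv, norm_norm, inv_mul_eq_div, div_mul_cancel₀ _ hx_pos.ne']

end Seminorm

theorem abs_sub_lt_one_or_lt_abs_sub_of_floor_cast_eq {a b : ℝ} {k : ℕ}
    (h : ((⌊a⌋ : ℤ) : ZMod k) = ⌊b⌋) : |a - b| < 1 ∨ (k : ℝ) - 1 < |a - b| := by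
  rcases eq_or_ne ⌊a⌋ ⌊b⌋ with hab | hab
  · exact .inl (Int.abs_sub_lt_one_of_floor_eq_floor hab)
  right
  have hdvd : (k : ℤ) ∣ ⌊a⌋ - ⌊b⌋ := ((ZMod.intCast_eq_intCast_iff _ _ _).mp h).symm.dvd
  have hk : (k : ℤ) ≤ |⌊a⌋ - ⌊b⌋| :=
    Int.le_of_dvd (abs_pos.mpr (sub_ne_zero.mpr hab)) ((dvd_abs _ _).mpr hdvd)
  have hfloor : |((⌊a⌋ - ⌊b⌋ : ℤ) : ℝ)| < |a - b| + 1 := by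
    rw [abs_lt]
    push_cast
    constructor <;> linarith [Int.floor_le a, Int.lt_floor_add_one a, Int.floor_le b,
      Int.lt_floor_add_one b, neg_abs_le (a - b), le_abs_self (a - b)]
  have hk' : (k : ℝ) ≤ |((⌊a⌋ - ⌊b⌋ : ℤ) : ℝ)| := by exact_mod_cast hk
  linarith

section CubeColoring

variable {ι : Type*}

noncomputable def cubeColoring (ε : ℝ) (k : ℕ) (x : ι → ℝ) : ι → ZMod k :=
  fun i => (⌊x i / ε⌋ : ZMod k)

variable [Fintype ι]

theorem norm_sub_lt_or_lt_norm_sub_of_cubeColoring_eq {ε : ℝ} (hε : 0 < ε) {k : ℕ}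
    {x y : ι → ℝ} (h : cubeColoring ε k x = cubeColoring ε k y) :
    ‖x - y‖ < ε ∨ (k - 1) * ε < ‖x - y‖ := by
  have hcoord (i : ι) : |x i - y i| < ε ∨ (k - 1) * ε < |x i - y i| := by
    have := abs_sub_lt_one_or_lt_abs_sub_of_floor_cast_eq (congrFun h i)
    rwa [← sub_div, abs_div, abs_of_pos hε, div_lt_one hε, lt_div_iff₀ hε] at this
  by_cases hnear : ∀ i, |x i - y i| < ε
  · exact .inl ((pi_norm_lt_iff hε).mpr hnear)
  obtain ⟨i, hi⟩ := not_forall.mp hnear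
  exact .inr (((hcoord i).resolve_left hi).trans_le (norm_le_pi_norm (x - y) i))

theorem cubeColoring_ne_of_apply_sub_eq_one {f : (ι → ℝ) → ℝ} {c C : ℝ} (hc : 0 < c)
    (hC : 0 < C) (hlow : ∀ x, c * ‖x‖ ≤ f x) (hup : ∀ x, f x ≤ C * ‖x‖)
    {x y : ι → ℝ} (hxy : f (x - y) = 1) :
    cubeColoring C⁻¹ (⌈C / c⌉₊ + 1) x ≠ cubeColoring C⁻¹ (⌈C / c⌉₊ + 1) y := by
  intro h
  rcases norm_sub_lt_or_lt_norm_sub_of_cubeColoring_eq (inv_pos.mpr hC) h with hnear | hfar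
  · have : f (x - y) < 1 := calc
      f (x - y) ≤ C * ‖x - y‖ := hup _
      _ < C * C⁻¹ := by gcongr
      _ = 1 := mul_inv_cancel₀ hC.ne'
    linarith
  · have : 1 < f (x - y) := calc
      1 = c * (C / c) * C⁻¹ := by field_simp
      _ ≤ c * (((⌈C / c⌉₊ + 1 : ℕ) : ℝ) - 1) * C⁻¹ := by
        gcongr
        push_cast
        linarith [Nat.le_ceil (C / c)]
      _ < c * ‖x - y‖ := by rw [mul_assoc]; gcongr
      _ ≤ f (x - y) := hlow _
    linarith

end CubeColoring

/-- Lemma 4.1: for every norm `‖·‖` on `ℝ^d`, the chromatic number of the unit distance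
graph on `(ℝ^d, ‖·‖)` is finite. -/
theorem distChromNum_lt_aleph0 (d : ℕ) (N : Seminorm ℝ (Fin d → ℝ))
    (hN : ∀ x : Fin d → ℝ, N x = 0 → x = 0) :
    distChromNum d N 1 < Cardinal.aleph0 := by
  obtain ⟨C, hC, hup⟩ := N.exists_pos_le_mul_norm_pi
  obtain ⟨c, hc, hlow⟩ := N.exists_pos_mul_norm_le (N.continuous_of_le_mul_norm hup) hN
  calc distChromNum d N 1 ≤ Cardinal.mk (Fin d → ZMod (⌈C / c⌉₊ + 1)) :=
        distChromNum_le_mk _ fun x y => cubeColoring_ne_of_apply_sub_eq_one hc hC hlow hup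
    _ < Cardinal.aleph0 := Cardinal.lt_aleph0_of_finite _
end

section
/- Let ‖·‖ be a norm on ℝ^d, let Q be a collection of finite subsets of ℝ^d each with at least 2 elements, and let E_0 = {e ⊆ ℝ^d : e is congruent in (ℝ^d, ‖·‖) to some f ∈ Q}. For t a positive integer, let B_t = {f ∪ T : f ∈ Q, T ⊆ ℝ^d, f ∩ T = ∅, |T| = t} and E_t = {e ⊆ ℝ^d : e is congruent in (ℝ^d, ‖·‖) to some g ∈ B_t}. Let H_0 = (ℝ^d, E_0) and H_t = (ℝ^d, E_t). If χ(H_0) < ∞, then χ(H_t) = χ(H_0). -/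
/-- Congruence in `(ℝ^d, ‖·‖)` where the norm is given by `N`: one set is the image of the
other under the composition of a surjective linear isometry of `(ℝ^d, N)` and a translation. -/
def NormCongruent (d : ℕ) (N : Seminorm ℝ (Fin d → ℝ)) (X Y : Set (Fin d → ℝ)) : Prop :=
  ∃ (f : (Fin d → ℝ) →ₗ[ℝ] (Fin d → ℝ)) (v : Fin d → ℝ),
    Function.Surjective f ∧ (∀ x, N (f x) = N x) ∧ Y = (fun x => f x + v) '' X


/-!
Every edge of `E_t` contains an edge of `E₀`, so `χ(H_t) ≤ χ(H₀)`. Conversely, let `φ` be a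
proper colouring of `H_t` with `k < χ(H₀)` colours; `k` is finite. By compactness of the space
of colourings (de Bruijn–Erdős), finitely many edges of `E₀` already defeat every
`k`-colouring. Only finitely many points lie in finite colour classes of `φ`, so some translate
of these finitely many edges avoids all of them; one translated edge is monochromatic for `φ`,
and, `E₀` being translation invariant, it is an edge of `E₀` inside an infinite colour class.
Adding `t` further points of that class gives a monochromatic edge of `E_t`.
-/

open Set

section Hypergraph

variable {V C : Type} {E E' : Set (Set V)}

theorem not_isProperColoring_iff {φ : V → C} :
    ¬ IsProperColoring E φ ↔ ∃ e ∈ E, ∀ x ∈ e, ∀ y ∈ e, φ x = φ y := by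
  simp [IsProperColoring]

theorem not_isProperColoring_of_subset_preimage {φ : V → C} {e : Set V} (he : e ∈ E) {c : C}
    (hec : e ⊆ φ ⁻¹' {c}) : ¬ IsProperColoring E φ :=
  not_isProperColoring_iff.mpr ⟨e, he, fun _ hx _ hy => (hec hx).trans (hec hy).symm⟩

theorem IsProperColoring.of_forall_exists_subset {φ : V → C} (hφ : IsProperColoring E φ)
    (hE : ∀ e' ∈ E', ∃ e ∈ E, e ⊆ e') : IsProperColoring E' φ := by
  intro e' he'
  obtain ⟨e, he, hee'⟩ := hE e' he'
  obtain ⟨x, hx, y, hy, hxy⟩ := hφ e he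
  exact ⟨x, hee' hx, y, hee' hy, hxy⟩

theorem chromNum_le_mk {φ : V → C} (hφ : IsProperColoring E φ) : chromNum E ≤ Cardinal.mk C :=
  csInf_le' ⟨C, φ, rfl, hφ⟩

theorem exists_isProperColoring_mk_eq_chromNum {φ : V → C} (hφ : IsProperColoring E φ) :
    ∃ (C' : Type) (ψ : V → C'), Cardinal.mk C' = chromNum E ∧ IsProperColoring E ψ :=
  csInf_mem
    (s := {c | ∃ (C' : Type) (ψ : V → C'), Cardinal.mk C' = c ∧ IsProperColoring E ψ})
    ⟨_, C, φ, rfl, hφ⟩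

theorem chromNum_le_of_forall_exists_subset {φ : V → C} (hφ : IsProperColoring E φ)
    (hE : ∀ e' ∈ E', ∃ e ∈ E, e ⊆ e') : chromNum E' ≤ chromNum E := by
  obtain ⟨C', ψ, hψC, hψ⟩ := exists_isProperColoring_mk_eq_chromNum hφ
  exact hψC ▸ chromNum_le_mk (hψ.of_forall_exists_subset hE)

theorem isOpen_setOf_forall_mem_eq [TopologicalSpace C] [DiscreteTopology C] {e : Set V}
    (he : e.Finite) : IsOpen {ψ : V → C | ∀ x ∈ e, ∀ y ∈ e, ψ x = ψ y} := by
  simp only [ofPred_forall]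
  refine he.isOpen_biInter fun x _ => he.isOpen_biInter fun y _ => ?_
  exact (isOpen_discrete {p : C × C | p.1 = p.2}).preimage
    (by fun_prop : Continuous fun ψ : V → C => (ψ x, ψ y))

theorem exists_finset_forall_not_isProperColoring [Finite C] (hE : ∀ e ∈ E, e.Finite)
    (h : ∀ φ : V → C, ¬ IsProperColoring E φ) :
    ∃ F : Finset (Set V), ↑F ⊆ E ∧ ∀ φ : V → C, ¬ IsProperColoring (F : Set (Set V)) φ := by
  let : TopologicalSpace C := ⊥
  have : DiscreteTopology C := ⟨rfl⟩
  obtain ⟨F, hF⟩ := isCompact_univ.elim_finite_subcover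
    (fun e : E => {φ : V → C | ∀ x ∈ (e : Set V), ∀ y ∈ (e : Set V), φ x = φ y})
    (fun e => isOpen_setOf_forall_mem_eq (hE e e.2))
    (fun φ _ => by simpa [not_isProperColoring_iff] using h φ)
  refine ⟨F.map (Function.Embedding.subtype _), by simp, fun φ => ?_⟩
  obtain ⟨e, he, hmono⟩ := mem_iUnion₂.mp (hF (mem_univ φ))
  exact not_isProperColoring_iff.mpr ⟨e, by simpa using he, hmono⟩

theorem finite_setOf_finite_fiber [Finite C] (φ : V → C) :
    {x | (φ ⁻¹' {φ x}).Finite}.Finite :=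
  ((toFinite {c | (φ ⁻¹' {c}).Finite}).biUnion fun _ hc => hc).subset
    fun _ hx => mem_biUnion hx rfl

end Hypergraph

section Translation

variable {V C : Type} [AddCommGroup V]

theorem exists_add_notMem_of_finite [Infinite V] {S B : Set V} (hS : S.Finite)
    (hB : B.Finite) : ∃ v, ∀ x ∈ S, x + v ∉ B := by
  obtain ⟨v, hv⟩ := (hB.image2 (· - ·) hS).infinite_compl.nonempty
  exact ⟨v, fun x hx hxv => hv ⟨x + v, hxv, x, hx, add_sub_cancel_left x v⟩⟩

theorem exists_mem_subset_infinite_fiber [Infinite V] [Finite C] {E : Set (Set V)}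
    (hfin : ∀ e ∈ E, e.Finite) (hne : ∀ e ∈ E, e.Nonempty)
    (hadd : ∀ e ∈ E, ∀ v : V, (· + v) '' e ∈ E)
    (h : ∀ ψ : V → C, ¬ IsProperColoring E ψ) (φ : V → C) :
    ∃ e ∈ E, ∃ c, e ⊆ φ ⁻¹' {c} ∧ (φ ⁻¹' {c}).Infinite := by
  obtain ⟨F, hFE, hF⟩ := exists_finset_forall_not_isProperColoring hfin h
  have hFfin : (⋃ e ∈ F, e).Finite := F.finite_toSet.biUnion fun e he => hfin e (hFE he)
  obtain ⟨v, hv⟩ := exists_add_notMem_of_finite hFfin (finite_setOf_finite_fiber φ)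
  obtain ⟨e, he, hmono⟩ := not_isProperColoring_iff.mp (hF fun x => φ (x + v))
  obtain ⟨x₀, hx₀⟩ := hne e (hFE he)
  refine ⟨(· + v) '' e, hadd e (hFE he) v, φ (x₀ + v), ?_, hv x₀ (mem_biUnion he hx₀)⟩
  rintro _ ⟨x, hx, rfl⟩
  exact hmono x hx x₀ hx₀

end Translation

section Congruence

variable {d : ℕ} {N : Seminorm ℝ (Fin d → ℝ)}

/-- `E₀` is `congruentCopies d N Q` and `E_t` is `congruentCopies d N (augmentations Q t)`. -/
def congruentCopies (d : ℕ) (N : Seminorm ℝ (Fin d → ℝ)) (Q : Set (Set (Fin d → ℝ))) :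
    Set (Set (Fin d → ℝ)) :=
  {e | ∃ f ∈ Q, NormCongruent d N f e}

def augmentations {α : Type} (Q : Set (Set α)) (t : ℕ) : Set (Set α) :=
  {g | ∃ f ∈ Q, ∃ T : Set α, T.Finite ∧ T.ncard = t ∧ f ∩ T = ∅ ∧ g = f ∪ T}

theorem NormCongruent.image_add_right {X Y : Set (Fin d → ℝ)} (h : NormCongruent d N X Y)
    (v : Fin d → ℝ) : NormCongruent d N X ((· + v) '' Y) := by
  obtain ⟨f, u, hsurj, hiso, rfl⟩ := h
  refine ⟨f, u + v, hsurj, hiso, ?_⟩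
  simp [image_image, add_assoc]

/-- Surjective linear endomorphisms of `ℝ^d` are injective. -/
theorem NormCongruent.exists_equiv {X Y : Set (Fin d → ℝ)} (h : NormCongruent d N X Y) :
    ∃ g : (Fin d → ℝ) ≃ (Fin d → ℝ), Y = g '' X ∧ ∀ Z, NormCongruent d N Z (g '' Z) := by
  obtain ⟨f, v, hsurj, hiso, rfl⟩ := h
  have hinj : Function.Injective f := LinearMap.injective_iff_surjective.mpr hsurj
  let g : (Fin d → ℝ) ≃ (Fin d → ℝ) := Equiv.ofBijective (fun x => f x + v)
    ⟨fun x y hxy => hinj (add_right_cancel hxy),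
      fun y => (hsurj (y - v)).imp fun x hx => by simp [hx]⟩
  exact ⟨g, rfl, fun Z => ⟨f, v, hsurj, hiso, rfl⟩⟩

variable {Q : Set (Set (Fin d → ℝ))} {e : Set (Fin d → ℝ)} {t : ℕ}

theorem finite_and_two_le_ncard_of_mem_congruentCopies (hQ : ∀ f ∈ Q, f.Finite ∧ 2 ≤ f.ncard)
    (he : e ∈ congruentCopies d N Q) : e.Finite ∧ 2 ≤ e.ncard := by
  obtain ⟨f, hf, hfe⟩ := he
  obtain ⟨g, rfl, -⟩ := hfe.exists_equiv
  rw [ncard_image_of_injective _ g.injective]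
  exact ⟨(hQ f hf).1.image g, (hQ f hf).2⟩

theorem image_add_right_mem_congruentCopies (he : e ∈ congruentCopies d N Q)
    (v : Fin d → ℝ) : (· + v) '' e ∈ congruentCopies d N Q :=
  let ⟨f, hf, hfe⟩ := he
  ⟨f, hf, hfe.image_add_right v⟩

theorem exists_subset_of_mem_congruentCopies_augmentations
    (he : e ∈ congruentCopies d N (augmentations Q t)) :
    ∃ e₀ ∈ congruentCopies d N Q, e₀ ⊆ e := by
  obtain ⟨_, ⟨f, hf, T, -, -, -, rfl⟩, hfe⟩ := he
  obtain ⟨g, rfl, hg⟩ := hfe.exists_equiv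
  exact ⟨g '' f, ⟨f, hf, hg f⟩, image_mono subset_union_left⟩

theorem union_mem_congruentCopies_augmentations (he : e ∈ congruentCopies d N Q)
    {T : Set (Fin d → ℝ)} (hT : T.Finite) (hTt : T.ncard = t) (heT : Disjoint e T) :
    e ∪ T ∈ congruentCopies d N (augmentations Q t) := by
  obtain ⟨f, hf, hfe⟩ := he
  obtain ⟨g, rfl, hg⟩ := hfe.exists_equiv
  have hgT : g '' (g ⁻¹' T) = T := image_preimage_eq T g.surjective
  refine ⟨f ∪ g ⁻¹' T, ⟨f, hf, g ⁻¹' T, hT.preimage g.injective.injOn, ?_, ?_, rfl⟩, ?_⟩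
  · rw [← hTt, ← ncard_image_of_injective _ g.injective, hgT]
  · exact disjoint_iff_inter_eq_empty.mp
      ((heT.preimage g).mono_left (subset_preimage_image g f))
  · simpa only [image_union, hgT] using hg (f ∪ g ⁻¹' T)

end Congruence

theorem chromNum_augmented_edges_eq_general (d : ℕ) (N : Seminorm ℝ (Fin d → ℝ))
    (Q : Set (Set (Fin d → ℝ))) (hQ : ∀ f ∈ Q, f.Finite ∧ 2 ≤ f.ncard)
    (t : ℕ)
    (E₀ Bt Et : Set (Set (Fin d → ℝ)))
    (hE₀ : E₀ = {e | ∃ f ∈ Q, NormCongruent d N f e})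
    (hBt : Bt = {g | ∃ f ∈ Q, ∃ T : Set (Fin d → ℝ),
      T.Finite ∧ T.ncard = t ∧ f ∩ T = ∅ ∧ g = f ∪ T})
    (hEt : Et = {e | ∃ g ∈ Bt, NormCongruent d N g e})
    (hfin : chromNum E₀ < Cardinal.aleph0) :
    chromNum Et = chromNum E₀ := by
  obtain rfl : E₀ = congruentCopies d N Q := hE₀
  obtain rfl : Bt = augmentations Q t := hBt
  obtain rfl : Et = congruentCopies d N (augmentations Q t) := hEt
  have hedge := fun e (he : e ∈ congruentCopies d N Q) =>
    finite_and_two_le_ncard_of_mem_congruentCopies hQ he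
  have hid : IsProperColoring (congruentCopies d N Q) id := fun e he =>
    (one_lt_ncard (hedge e he).1).mp (hedge e he).2
  have hsub := fun e (he : e ∈ congruentCopies d N (augmentations Q t)) =>
    exists_subset_of_mem_congruentCopies_augmentations he
  refine le_antisymm (chromNum_le_of_forall_exists_subset hid hsub) ?_
  by_contra! hlt
  obtain ⟨C, φ, hC, hφ⟩ :=
    exists_isProperColoring_mk_eq_chromNum (hid.of_forall_exists_subset hsub)
  have hnot : ∀ ψ : (Fin d → ℝ) → C, ¬ IsProperColoring (congruentCopies d N Q) ψ :=
    fun ψ hψ => (chromNum_le_mk hψ).not_gt (hC ▸ hlt)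
  have : Finite C := Cardinal.mk_lt_aleph0_iff.mp (hC ▸ hlt.trans hfin)
  have : Nontrivial (Fin d → ℝ) := by
    obtain ⟨e, he, -⟩ := not_isProperColoring_iff.mp (hnot φ)
    obtain ⟨x, -, y, -, hxy⟩ := hid e he
    exact ⟨x, y, hxy⟩
  have : Infinite (Fin d → ℝ) := Module.Free.infinite ℝ _
  obtain ⟨e, he, c, hec, hc⟩ := exists_mem_subset_infinite_fiber
    (fun e he => (hedge e he).1) (fun e he => (hid e he).imp fun _ h => h.1)
    (fun e he => image_add_right_mem_congruentCopies he) hnot φ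
  obtain ⟨T, hTc, hT, hTt⟩ := (hc.sdiff (hedge e he).1).exists_subset_ncard_eq t
  exact not_isProperColoring_of_subset_preimage
    (union_mem_congruentCopies_augmentations he hT hTt (disjoint_sdiff_right.mono_right hTc))
    (union_subset hec (hTc.trans sdiff_subset)) hφ

/-- Theorem 4.4: let `Q` be a collection of finite subsets of `(ℝ^d, ‖·‖)`, each with at
least 2 elements, `E_0` the set of congruent copies of members of `Q`, `B_t` the augmentations
of members of `Q` by `t` extra points, and `E_t` the set of congruent copies of members of
`B_t`. If `χ(ℝ^d, E_0) < ∞` then `χ(ℝ^d, E_t) = χ(ℝ^d, E_0)`. -/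
theorem chromNum_augmented_edges_eq (d : ℕ) (N : Seminorm ℝ (Fin d → ℝ))
    (hN : ∀ x : Fin d → ℝ, N x = 0 → x = 0)
    (Q : Set (Set (Fin d → ℝ))) (hQ : ∀ f ∈ Q, f.Finite ∧ 2 ≤ f.ncard)
    (t : ℕ) (ht : 0 < t)
    (E₀ Bt Et : Set (Set (Fin d → ℝ)))
    (hE₀ : E₀ = {e | ∃ f ∈ Q, NormCongruent d N f e})
    (hBt : Bt = {g | ∃ f ∈ Q, ∃ T : Set (Fin d → ℝ),
      T.Finite ∧ T.ncard = t ∧ f ∩ T = ∅ ∧ g = f ∪ T})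
    (hEt : Et = {e | ∃ g ∈ Bt, NormCongruent d N g e})
    (hfin : chromNum E₀ < Cardinal.aleph0) :
    chromNum Et = chromNum E₀ :=
  chromNum_augmented_edges_eq_general d N Q hQ t E₀ Bt Et hE₀ hBt hEt hfin
end

section
/- Let ‖·‖ be a norm on ℝ^d. For each integer m > 2, let E_m = {T ⊆ ℝ^d : |T| = m and T contains two points at ‖·‖-distance 1 apart}, and let G_m = (ℝ^d, E_m). Then χ(G_m) = χ((ℝ^d, ‖·‖), 1) for all such m. -/
/-- The chromatic number of the unit distance graph on `ℝ^d` equipped with the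
(semi)norm `N`, i.e. of the graph whose edges are the pairs `{x, y}` with `N (x - y) = 1`. -/
noncomputable def unitDistChromNum (d : ℕ) (N : Seminorm ℝ (Fin d → ℝ)) : Cardinal :=
  sInf {c : Cardinal | ∃ (C : Type) (φ : (Fin d → ℝ) → C),
    Cardinal.mk C = c ∧ ∀ x y : Fin d → ℝ, N (x - y) = 1 → φ x ≠ φ y}

open Cardinal Set Pointwise

/-- The edges of `G_m` for an arbitrary adjacency relation. -/
def adjSets {V : Type} (adj : V → V → Prop) (m : ℕ) : Set (Set V) :=
  {T | T.ncard = m ∧ ∃ x ∈ T, ∃ y ∈ T, adj x y}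

def monoVerts {V C : Type} (adj : V → V → Prop) (φ : V → C) : Set V :=
  {x | ∃ y, adj x y ∧ φ x = φ y}

section Coloring

variable {V C : Type} {adj : V → V → Prop} {m : ℕ} {φ : V → C}

theorem isProperColoring_adjSets (hφ : ∀ x y, adj x y → φ x ≠ φ y) :
    IsProperColoring (adjSets adj m) φ := by
  rintro T ⟨-, x, hx, y, hy, hxy⟩
  exact ⟨x, hx, y, hy, hφ x y hxy⟩

theorem IsProperColoring.finite_setOf_eq (hm : 2 ≤ m) (hφ : IsProperColoring (adjSets adj m) φ)
    {u w : V} (huw : adj u w) (hne : u ≠ w) (hc : φ u = φ w) : {x | φ x = φ u}.Finite := by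
  set S := {x | φ x = φ u}
  by_contra hinf
  obtain ⟨T', hT'S, hT'fin, hT'card⟩ :=
    (Set.Infinite.sdiff hinf (toFinite {u, w})).exists_subset_ncard_eq (m - 2)
  have hcard : ({u, w} ∪ T').ncard = m := by
    rw [ncard_union_eq (disjoint_sdiff_right.mono_right hT'S) (toFinite _) hT'fin,
      ncard_pair hne, hT'card]
    omega
  have hTS : {u, w} ∪ T' ⊆ S :=
    union_subset (insert_subset rfl (singleton_subset_iff.2 hc.symm))
      (hT'S.trans sdiff_subset)
  obtain ⟨a, ha, b, hb, hab⟩ := hφ _ ⟨hcard, u, by simp, w, by simp, huw⟩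
  exact hab ((hTS ha).trans (hTS hb).symm)

theorem monoVerts_subset_iUnion :
    monoVerts adj φ ⊆ ⋃ c, {x | φ x = c} ∩ monoVerts adj φ :=
  fun x hx => mem_iUnion.2 ⟨φ x, rfl, hx⟩

noncomputable def recolor (adj : V → V → Prop) (φ : V → C) (x : V) : C ⊕ monoVerts adj φ := by
  classical
  exact if h : x ∈ monoVerts adj φ then .inr ⟨x, h⟩ else .inl (φ x)

variable (hirr : ∀ x, ¬adj x x)
include hirr

theorem IsProperColoring.finite_setOf_eq_inter_monoVerts (hm : 2 ≤ m)
    (hφ : IsProperColoring (adjSets adj m) φ) (c : C) :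
    ({x | φ x = c} ∩ monoVerts adj φ).Finite := by
  rcases eq_empty_or_nonempty ({x | φ x = c} ∩ monoVerts adj φ) with he | ⟨u, hcu, w, huw, hc⟩
  · exact he ▸ finite_empty
  refine (hφ.finite_setOf_eq hm huw (fun h => hirr u (h ▸ huw)) hc).subset fun x hx => ?_
  exact hx.1.trans hcu.symm

theorem IsProperColoring.finite_monoVerts [Finite C] (hm : 2 ≤ m)
    (hφ : IsProperColoring (adjSets adj m) φ) : (monoVerts adj φ).Finite :=
  (finite_iUnion (hφ.finite_setOf_eq_inter_monoVerts hirr hm)).subset monoVerts_subset_iUnion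

theorem recolor_ne {x y : V} (h : adj x y) : recolor adj φ x ≠ recolor adj φ y := by
  classical
  intro heq
  unfold recolor at heq
  by_cases hx : x ∈ monoVerts adj φ <;> by_cases hy : y ∈ monoVerts adj φ <;>
    simp only [hx, hy, dif_pos, dif_neg, not_false_eq_true, reduceCtorEq, Sum.inr.injEq,
      Subtype.mk.injEq, Sum.inl.injEq] at heq
  · exact hirr x (heq ▸ h)
  · exact hx ⟨y, h, heq⟩

theorem mk_monoVerts_le [Infinite C] (hm : 2 ≤ m) (hφ : IsProperColoring (adjSets adj m) φ) :
    #(monoVerts adj φ) ≤ #C :=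
  calc #(monoVerts adj φ)
      ≤ #(⋃ c, {x | φ x = c} ∩ monoVerts adj φ) :=
        mk_le_mk_of_subset monoVerts_subset_iUnion
    _ ≤ #C * ⨆ c, #↥({x | φ x = c} ∩ monoVerts adj φ) := mk_iUnion_le _
    _ ≤ #C * ℵ₀ := by
      gcongr
      exact ciSup_le' fun c =>
        le_aleph0_iff_set_countable.2 (hφ.finite_setOf_eq_inter_monoVerts hirr hm c).countable
    _ = #C := mul_eq_left (aleph0_le_mk C) (aleph0_le_mk C) aleph0_ne_zero

theorem exists_adj_coloring_of_infinite [Infinite C] (hm : 2 ≤ m)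
    (hφ : IsProperColoring (adjSets adj m) φ) :
    ∃ (C' : Type) (ψ : V → C'), #C' ≤ #C ∧ ∀ x y, adj x y → ψ x ≠ ψ y := by
  refine ⟨_, recolor adj φ, ?_, fun x y => recolor_ne hirr⟩
  rw [mk_sum, lift_id, lift_id, add_eq_left (aleph0_le_mk C) (mk_monoVerts_le hirr hm hφ)]

end Coloring

section Translation

variable {V C : Type} [AddGroup V] {adj : V → V → Prop}

theorem exists_add_notMem [Infinite V] {F U : Set V} (hF : F.Finite) (hU : U.Finite) :
    ∃ t, ∀ x ∈ F, x + t ∉ U := by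
  obtain ⟨t, ht⟩ := (hF.neg.add hU).infinite_compl.nonempty
  refine ⟨t, fun x hx hxt => ht ?_⟩
  simpa using add_mem_add (neg_mem_neg.2 hx) hxt

theorem exists_adj_coloring_of_finite [Finite C] [Infinite V]
    (hadd : ∀ x y t, adj x y → adj (x + t) (y + t)) {φ : V → C} (hU : (monoVerts adj φ).Finite) :
    ∃ ψ : V → C, ∀ x y, adj x y → ψ x ≠ ψ y := by
  choose t ht using fun s : Finset V => exists_add_notMem s.finite_toSet hU
  obtain ⟨ψ, hψ⟩ := Finset.rado_selection fun s x => φ (x + t s)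
  classical
  refine ⟨ψ, fun x y hxy heq => ?_⟩
  obtain ⟨s, hs, hψs⟩ := hψ {x, y}
  rw [hψs x (by simp), hψs y (by simp)] at heq
  exact ht s x (hs (by simp)) ⟨y + t s, hadd x y _ hxy, heq⟩

end Translation

theorem unitDistChromNum_le_of_isProperColoring {d m : ℕ} {N : Seminorm ℝ (Fin d → ℝ)}
    {C : Type} {φ : (Fin d → ℝ) → C} (hm : 2 ≤ m)
    (hφ : IsProperColoring (adjSets (fun x y => N (x - y) = 1) m) φ) :
    unitDistChromNum d N ≤ #C := by
  have hirr : ∀ x : Fin d → ℝ, ¬N (x - x) = 1 := by simp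
  have hadd : ∀ x y t : Fin d → ℝ, N (x - y) = 1 → N (x + t - (y + t)) = 1 := by simp
  suffices ∃ (C' : Type) (ψ : (Fin d → ℝ) → C'), #C' ≤ #C ∧ ∀ x y, N (x - y) = 1 → ψ x ≠ ψ y by
    obtain ⟨C', ψ, hC', hψ⟩ := this
    exact le_trans (csInf_le' ⟨C', ψ, rfl, hψ⟩) hC'
  rcases finite_or_infinite C with hC | hC
  · obtain ⟨ψ, hψ⟩ : ∃ ψ : (Fin d → ℝ) → C, ∀ x y, N (x - y) = 1 → ψ x ≠ ψ y := by
      rcases isEmpty_or_nonempty (Fin d) with _ | _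
      · exact ⟨φ, fun x y h => absurd (Subsingleton.elim x y ▸ h) (hirr x)⟩
      · exact exists_adj_coloring_of_finite hadd (hφ.finite_monoVerts hirr hm)
    exact ⟨C, ψ, le_rfl, hψ⟩
  · exact exists_adj_coloring_of_infinite hirr hm hφ

theorem chromNum_unit_mset_hypergraph_general (d : ℕ) (N : Seminorm ℝ (Fin d → ℝ))
    (m : ℕ) (hm : 2 < m) :
    chromNum {T : Set (Fin d → ℝ) | T.ncard = m ∧ ∃ x ∈ T, ∃ y ∈ T, N (x - y) = 1} =
      unitDistChromNum d N := by
  have hid : ∀ x y : Fin d → ℝ, N (x - y) = 1 → id x ≠ id y := by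
    rintro x y h rfl
    simp at h
  apply le_antisymm
  · refine csInf_le_csInf (OrderBot.bddBelow _) ⟨_, _, id, rfl, hid⟩ ?_
    rintro _ ⟨C, φ, rfl, hφ⟩
    exact ⟨C, φ, rfl, isProperColoring_adjSets hφ⟩
  · refine le_csInf ⟨_, _, id, rfl, isProperColoring_adjSets hid⟩ ?_
    rintro _ ⟨C, φ, rfl, hφ⟩
    exact unitDistChromNum_le_of_isProperColoring hm.le hφ

/-- Corollary 4.4.1: for any norm `‖·‖` on `ℝ^d` and any `m > 2`, the `m`-uniform
hypergraph `G_m` whose edges are all `m`-sets containing two points at `‖·‖`-distance 1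
has chromatic number `χ((ℝ^d, ‖·‖), 1)`. -/
theorem chromNum_unit_mset_hypergraph (d : ℕ) (N : Seminorm ℝ (Fin d → ℝ))
    (hN : ∀ x : Fin d → ℝ, N x = 0 → x = 0) (m : ℕ) (hm : 2 < m) :
    chromNum {T : Set (Fin d → ℝ) | T.ncard = m ∧ ∃ x ∈ T, ∃ y ∈ T, N (x - y) = 1} =
      unitDistChromNum d N :=
  chromNum_unit_mset_hypergraph_general d N m hm
end
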